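/- arXiv:1701.06951 — 11 statements merged into one kernel-verified Lean document; each statement's English description precedes it below -/
import Mathlib

section
/- Let B be a square substochastic matrix whose index of contraction α := ĉon B is finite. Then ‖B^k‖_∞ = 1 for every integer k with 0 ≤ k ≤ α, ‖B^{α+1}‖_∞ < 1, and the sequence of norms is nonincreasing: ‖B^{k+1}‖_∞ ≤ ‖B^k‖_∞ for all k ≥ 0 (so ‖B^k‖_∞ < 1 for all k > α). -/
open Matrix Filter Finset

/-- A substochastic matrix: nonnegative entries, row sums at most one. -/
def IsSubstochastic {m n : Type*} [Fintype n] (B : Matrix m n ℝ) : Prop :=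
  (∀ i j, 0 ≤ B i j) ∧ ∀ i, ∑ j, B i j ≤ 1

/-- Ĵ(B): the set of rows with row-sum strictly less than one. -/
def Jhat {m n : Type*} [Fintype n] (B : Matrix m n ℝ) : Set m :=
  {i | ∑ j, B i j < 1}

/-- There is a walk of length `ℓ` (a nonempty sequence of `ℓ` consecutive edges) in the
digraph of `A` (edge `i → j` iff `A i j ≠ 0`) starting at `i` and ending in `S`. -/
def IsWalkTo {V : Type*} (A : Matrix V V ℝ) (i : V) (S : Set V) (ℓ : ℕ) : Prop :=
  1 ≤ ℓ ∧ ∃ w : ℕ → V, w 0 = i ∧ (∀ k < ℓ, A (w k) (w (k + 1)) ≠ 0) ∧ w ℓ ∈ S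

/-- The index of contraction `ĉon B ∈ ℕ∞`:
`max(0, sup_{i ∉ Ĵ(B)} inf_{p ∈ P̂ᵢ(B)} |p|)` with `inf ∅ = ∞`, `sup ∅ = -∞`
(in `ℕ∞` the empty supremum is `0`, matching `max(0, -∞) = 0`). -/
noncomputable def conHat {V : Type*} [Fintype V] (B : Matrix V V ℝ) : ℕ∞ :=
  ⨆ i ∈ (Jhat B)ᶜ, ⨅ ℓ ∈ {ℓ : ℕ | IsWalkTo B i (Jhat B) ℓ}, (ℓ : ℕ∞)

/-- The maximum absolute row-sum norm `‖·‖_∞`. -/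
noncomputable def rowSumNorm {m n : Type*} [Fintype n] (B : Matrix m n ℝ) : ℝ :=
  ⨆ i, ∑ j, |B i j|

/-- `B` is convergent: `Bᵏ → 0` as `k → ∞`. -/
def IsConvergent {V : Type*} [Fintype V] [DecidableEq V] (B : Matrix V V ℝ) : Prop :=
  Tendsto (fun k : ℕ => B ^ k) atTop (nhds 0)

/-- `B` is irreducible: its digraph is strongly connected, i.e. for every pair of
vertices `i, j` there is a walk from `i` to `j`. -/
def IsIrreducibleMat {V : Type*} (B : Matrix V V ℝ) : Prop :=
  ∀ i j : V, ∃ ℓ : ℕ, 1 ≤ ℓ ∧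
    ∃ w : ℕ → V, w 0 = i ∧ w ℓ = j ∧ ∀ k < ℓ, B (w k) (w (k + 1)) ≠ 0

namespace Stmt0Aux

variable {n : ℕ}

def Reach (B : Matrix (Fin n) (Fin n) ℝ) : ℕ → Fin n → Prop
  | 0, i => i ∈ Jhat B
  | k+1, i => Reach B k i ∨ ∃ j, B i j ≠ 0 ∧ Reach B k j

lemma reach_mono {B : Matrix (Fin n) (Fin n) ℝ} {k m : ℕ} (hkm : k ≤ m) {i : Fin n}
    (h : Reach B k i) : Reach B m i := by
  induction m with
  | zero => simpa [Nat.le_zero.mp hkm] using h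
  | succ m ih =>
    rcases Nat.lt_or_ge k (m+1) with h1 | h1
    · exact Or.inl (ih (Nat.lt_succ_iff.mp h1))
    · have : k = m + 1 := le_antisymm hkm h1
      subst this; exact h

lemma pow_entry_nonneg {B : Matrix (Fin n) (Fin n) ℝ} (hB : IsSubstochastic B) (k : ℕ)
    (i j : Fin n) : 0 ≤ (B ^ k) i j := by
  induction k generalizing i j with
  | zero => rw [pow_zero]; by_cases h : i = j <;> simp [Matrix.one_apply, h]
  | succ k ih =>
    rw [pow_succ, Matrix.mul_apply]
    exact Finset.sum_nonneg fun l _ => mul_nonneg (ih i l) (hB.1 l j)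

lemma rowsum_mul (A C : Matrix (Fin n) (Fin n) ℝ) (i : Fin n) :
    ∑ j, (A * C) i j = ∑ j, A i j * ∑ l, C j l := by
  simp only [Matrix.mul_apply]
  rw [Finset.sum_comm]
  simp [Finset.mul_sum]

lemma rowsum_pow_le_one {B : Matrix (Fin n) (Fin n) ℝ} (hB : IsSubstochastic B) (k : ℕ)
    (i : Fin n) : ∑ j, (B ^ k) i j ≤ 1 := by
  induction k generalizing i with
  | zero => simp [Matrix.one_apply]
  | succ k ih =>
    rw [pow_succ, rowsum_mul]
    calc ∑ j, (B ^ k) i j * ∑ l, B j l ≤ ∑ j, (B ^ k) i j := by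
          refine Finset.sum_le_sum fun j _ => ?_
          exact mul_le_of_le_one_right (pow_entry_nonneg hB k i j) (hB.2 j)
      _ ≤ 1 := ih i

lemma rowsum_pow_succ_le {B : Matrix (Fin n) (Fin n) ℝ} (hB : IsSubstochastic B) (k : ℕ)
    (i : Fin n) : ∑ j, (B ^ (k+1)) i j ≤ ∑ j, (B ^ k) i j := by
  rw [pow_succ, rowsum_mul]
  refine Finset.sum_le_sum fun j _ => ?_
  exact mul_le_of_le_one_right (pow_entry_nonneg hB k i j) (hB.2 j)

lemma rowsum_eq_one_of_not_reach {B : Matrix (Fin n) (Fin n) ℝ} (hB : IsSubstochastic B)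
    (k : ℕ) (i : Fin n) (h : ¬ Reach B k i) : ∑ j, (B ^ (k+1)) i j = 1 := by
  induction k generalizing i with
  | zero =>
    rw [pow_one]
    have : ¬ (∑ j, B i j < 1) := h
    linarith [hB.2 i, not_lt.mp this]
  | succ k ih =>
    have h1 : ¬ Reach B k i := fun hr => h (Or.inl hr)
    have h2 : ∀ j, B i j ≠ 0 → ¬ Reach B k j := fun j hj hr => h (Or.inr ⟨j, hj, hr⟩)
    have hi0 : ¬ Reach B 0 i := fun hr => h1 (reach_mono (Nat.zero_le k) hr)
    have hrow : ∑ j, B i j = 1 := by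
      have : ¬ (∑ j, B i j < 1) := hi0
      linarith [hB.2 i, not_lt.mp this]
    rw [pow_succ', rowsum_mul]
    calc ∑ j, B i j * ∑ l, (B ^ (k+1)) j l = ∑ j, B i j := by
          refine Finset.sum_congr rfl fun j _ => ?_
          by_cases hj : B i j = 0
          · simp [hj]
          · rw [ih j (h2 j hj), mul_one]
      _ = 1 := hrow

lemma rowsum_lt_one_of_reach {B : Matrix (Fin n) (Fin n) ℝ} (hB : IsSubstochastic B)
    (k : ℕ) (i : Fin n) (h : Reach B k i) : ∑ j, (B ^ (k+1)) i j < 1 := by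
  induction k generalizing i with
  | zero =>
    rw [pow_one]; exact h
  | succ k ih =>
    rcases h with h | ⟨j0, hj0, hr⟩
    · exact lt_of_le_of_lt (rowsum_pow_succ_le hB (k+1) i) (ih i h)
    · rw [pow_succ', rowsum_mul]
      have hlt : ∑ j, B i j * ∑ l, (B ^ (k+1)) j l < ∑ j, B i j := by
        refine Finset.sum_lt_sum (fun j _ => ?_) ⟨j0, Finset.mem_univ j0, ?_⟩
        · exact mul_le_of_le_one_right (hB.1 i j) (rowsum_pow_le_one hB (k+1) j)
        · have hpos : 0 < B i j0 := lt_of_le_of_ne (hB.1 i j0) (Ne.symm hj0)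
          calc B i j0 * ∑ l, (B ^ (k+1)) j0 l < B i j0 * 1 :=
                (mul_lt_mul_iff_right₀ hpos).mpr (ih j0 hr)
            _ = B i j0 := mul_one _
      exact lt_of_lt_of_le hlt (hB.2 i)

lemma reach_of_walk {B : Matrix (Fin n) (Fin n) ℝ} {i : Fin n} {ℓ : ℕ}
    (h : IsWalkTo B i (Jhat B) ℓ) : Reach B ℓ i := by
  induction ℓ generalizing i with
  | zero => exact absurd h.1 (by norm_num)
  | succ ℓ ih =>
    obtain ⟨-, w, hw0, hedge, hend⟩ := h
    rcases Nat.eq_zero_or_pos ℓ with rfl | hℓ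
    · exact Or.inr ⟨w 1, by simpa [hw0] using hedge 0 (by norm_num), hend⟩
    · have hw : IsWalkTo B (w 1) (Jhat B) ℓ :=
        ⟨hℓ, fun m => w (m+1), rfl, fun m hm => hedge (m+1) (by omega), hend⟩
      exact Or.inr ⟨w 1, by simpa [hw0] using hedge 0 (by omega), ih hw⟩

lemma walk_of_reach {B : Matrix (Fin n) (Fin n) ℝ} {k : ℕ} {i : Fin n} (h : Reach B k i) :
    i ∈ Jhat B ∨ ∃ ℓ, ℓ ≤ k ∧ IsWalkTo B i (Jhat B) ℓ := by
  induction k generalizing i with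
  | zero => exact Or.inl h
  | succ k ih =>
    rcases h with h | ⟨j, hij, hj⟩
    · rcases ih h with h | ⟨ℓ, hℓ, hw⟩
      · exact Or.inl h
      · exact Or.inr ⟨ℓ, by omega, hw⟩
    · rcases ih hj with h | ⟨ℓ, hℓ, hℓ1, w, hw0, hedge, hend⟩
      · refine Or.inr ⟨1, by omega, le_refl 1, fun m => if m = 0 then i else j, by simp, ?_, by simp [h]⟩
        intro m hm
        interval_cases m
        simpa using hij
      · refine Or.inr ⟨ℓ+1, by omega, by omega, fun m => if m = 0 then i else w (m-1), by simp, ?_, ?_⟩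
        · intro m hm
          rcases Nat.eq_zero_or_pos m with rfl | hm0
          · simpa [hw0] using hij
          · have h1 : m ≠ 0 := by omega
            have h2 : m + 1 ≠ 0 := by omega
            simp only [h1, h2, if_false]
            have h3 : m + 1 - 1 = (m - 1) + 1 := by omega
            rw [h3]
            exact hedge (m-1) (by omega)
        · simp only [Nat.succ_ne_zero, if_false]
          simpa using hend

lemma reach_alpha {B : Matrix (Fin n) (Fin n) ℝ} {α : ℕ} (hα : conHat B = (α : ℕ∞))
    (i : Fin n) : Reach B α i := by
  by_cases hi : i ∈ Jhat B
  · exact reach_mono (Nat.zero_le α) (show Reach B 0 i from hi)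
  · have hi' : i ∈ (Jhat B)ᶜ := hi
    have h1 : (⨅ ℓ ∈ {ℓ : ℕ | IsWalkTo B i (Jhat B) ℓ}, (ℓ : ℕ∞)) ≤ (α : ℕ∞) := by
      rw [← hα]
      exact le_iSup₂ (f := fun i _ => ⨅ ℓ ∈ {ℓ : ℕ | IsWalkTo B i (Jhat B) ℓ}, (ℓ : ℕ∞)) i hi'
    have h2 : ∃ ℓ, IsWalkTo B i (Jhat B) ℓ ∧ ℓ ≤ α := by
      by_contra hc
      push_neg at hc
      have hle : ((α + 1 : ℕ) : ℕ∞) ≤ ⨅ ℓ ∈ {ℓ : ℕ | IsWalkTo B i (Jhat B) ℓ}, (ℓ : ℕ∞) := by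
        refine le_iInf₂ fun ℓ hℓ => ?_
        exact_mod_cast Nat.succ_le_of_lt (hc ℓ hℓ)
      have := hle.trans h1
      exact absurd (by exact_mod_cast this) (Nat.not_succ_le_self α)
    obtain ⟨ℓ, hw, hℓ⟩ := h2
    exact reach_mono hℓ (reach_of_walk hw)

lemma exists_not_reach {B : Matrix (Fin n) (Fin n) ℝ} {α : ℕ} (hα : conHat B = (α : ℕ∞))
    (hpos : 1 ≤ α) : ∃ i, ¬ Reach B (α - 1) i := by
  by_contra hc
  push_neg at hc
  have hle : conHat B ≤ ((α - 1 : ℕ) : ℕ∞) := by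
    refine iSup₂_le fun i hi => ?_
    rcases walk_of_reach (hc i) with h | ⟨ℓ, hℓ, hw⟩
    · exact absurd h hi
    · exact le_trans (iInf₂_le ℓ hw) (by exact_mod_cast hℓ)
  rw [hα] at hle
  have : α ≤ α - 1 := by exact_mod_cast hle
  omega

end Stmt0Aux

open Stmt0Aux in
theorem stmt0 {n : ℕ} (hn : 0 < n) (B : Matrix (Fin n) (Fin n) ℝ)
    (hB : IsSubstochastic B) (α : ℕ) (hα : conHat B = (α : ℕ∞)) :
    (∀ k : ℕ, k ≤ α → rowSumNorm (B ^ k) = 1) ∧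
      rowSumNorm (B ^ (α + 1)) < 1 ∧
      ∀ k : ℕ, rowSumNorm (B ^ (k + 1)) ≤ rowSumNorm (B ^ k) := by
  haveI : Nonempty (Fin n) := ⟨⟨0, hn⟩⟩
  have hnorm : ∀ k : ℕ, rowSumNorm (B ^ k) = ⨆ i, ∑ j, (B ^ k) i j := by
    intro k
    unfold rowSumNorm
    congr 1
    funext i
    exact Finset.sum_congr rfl fun j _ => abs_of_nonneg (pow_entry_nonneg hB k i j)
  have bdd : ∀ f : Fin n → ℝ, BddAbove (Set.range f) := fun f => (Set.finite_range f).bddAbove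
  refine ⟨?_, ?_, ?_⟩
  · intro k hk
    rw [hnorm]
    cases k with
    | zero =>
      have : ∀ i : Fin n, ∑ j, (B ^ 0) i j = (1 : ℝ) := by
        intro i; simp [Matrix.one_apply]
      simp only [this]
      exact ciSup_const
    | succ m =>
      have hpos : 1 ≤ α := by omega
      obtain ⟨i0, hi0⟩ := exists_not_reach hα hpos
      have hi0m : ¬ Reach B m i0 := fun hr => hi0 (reach_mono (by omega) hr)
      have h1 : ∑ j, (B ^ (m+1)) i0 j = 1 := rowsum_eq_one_of_not_reach hB m i0 hi0m
      refine le_antisymm (ciSup_le fun i => rowsum_pow_le_one hB (m+1) i) ?_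
      calc (1 : ℝ) = ∑ j, (B ^ (m+1)) i0 j := h1.symm
        _ ≤ ⨆ i, ∑ j, (B ^ (m+1)) i j := le_ciSup (f := fun i => ∑ j, (B ^ (m+1)) i j) (bdd _) i0
  · rw [hnorm]
    obtain ⟨i0, hi0⟩ := Finite.exists_max fun i : Fin n => ∑ j, (B ^ (α+1)) i j
    have : (⨆ i, ∑ j, (B ^ (α+1)) i j) ≤ ∑ j, (B ^ (α+1)) i0 j := ciSup_le hi0
    exact lt_of_le_of_lt this (rowsum_lt_one_of_reach hB α i0 (reach_alpha hα i0))
  · intro k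
    rw [hnorm, hnorm]
    refine ciSup_le fun i => ?_
    exact le_trans (rowsum_pow_succ_le hB k i) (le_ciSup (f := fun i => ∑ j, (B ^ k) i j) (bdd _) i)
end

section
/- Let B be a square substochastic matrix whose index of contraction ĉon B is infinite. Then ‖B^k‖_∞ = 1 for every integer k ≥ 1. -/
open Matrix Filter Finset

lemma substoch_pow {n : ℕ} {B : Matrix (Fin n) (Fin n) ℝ} (hB : IsSubstochastic B)
    (k : ℕ) : IsSubstochastic (B ^ k) := by
  induction k with
  | zero =>
    refine ⟨fun i j => ?_, fun i => ?_⟩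
    · simp only [pow_zero, Matrix.one_apply]
      split <;> norm_num
    · simp [pow_zero, Matrix.one_apply]
  | succ k ih =>
    rw [pow_succ']
    refine ⟨fun i j => ?_, fun i => ?_⟩
    · rw [Matrix.mul_apply]
      exact Finset.sum_nonneg fun m _ => mul_nonneg (hB.1 i m) (ih.1 m j)
    · calc ∑ j, (B * B ^ k) i j = ∑ m, B i m * ∑ j, (B ^ k) m j := by
            simp only [Matrix.mul_apply, Finset.mul_sum]
            rw [Finset.sum_comm]
      _ ≤ ∑ m, B i m * 1 :=
            Finset.sum_le_sum fun m _ => mul_le_mul_of_nonneg_left (ih.2 m) (hB.1 i m)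
      _ = ∑ m, B i m := by simp
      _ ≤ 1 := hB.2 i

lemma exists_noWalk {n : ℕ} {B : Matrix (Fin n) (Fin n) ℝ} (hα : conHat B = ⊤) :
    ∃ i : Fin n, i ∉ Jhat B ∧ ∀ ℓ, ¬ IsWalkTo B i (Jhat B) ℓ := by
  by_contra h
  push_neg at h
  have hlt : conHat B < ⊤ := by
    unfold conHat
    have : ∀ i : Fin n, (⨆ _ : i ∈ (Jhat B)ᶜ, ⨅ ℓ ∈ {ℓ : ℕ | IsWalkTo B i (Jhat B) ℓ},
        (ℓ : ℕ∞)) < ⊤ := by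
      intro i
      by_cases hi : i ∈ (Jhat B)ᶜ
      · obtain ⟨ℓ, hℓ⟩ := h i hi
        refine lt_of_le_of_lt ?_ (show (ℓ : ℕ∞) < ⊤ from ENat.coe_lt_top ℓ)
        rw [iSup_pos hi]
        exact iInf₂_le ℓ hℓ
      · simp [hi]
    calc (⨆ i ∈ (Jhat B)ᶜ, ⨅ ℓ ∈ {ℓ : ℕ | IsWalkTo B i (Jhat B) ℓ}, (ℓ : ℕ∞))
        = Finset.univ.sup (fun i : Fin n => ⨆ _ : i ∈ (Jhat B)ᶜ,
            ⨅ ℓ ∈ {ℓ : ℕ | IsWalkTo B i (Jhat B) ℓ}, (ℓ : ℕ∞)) := by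
          rw [Finset.sup_univ_eq_iSup]
      _ < ⊤ := Finset.sup_lt_iff (by norm_num) |>.2 (fun i _ => this i)
  exact absurd hα hlt.ne

theorem stmt1 {n : ℕ} (B : Matrix (Fin n) (Fin n) ℝ)
    (hB : IsSubstochastic B) (hα : conHat B = ⊤) :
    ∀ k : ℕ, 1 ≤ k → rowSumNorm (B ^ k) = 1 := by
  obtain ⟨i, hiJ, hNoWalk⟩ := exists_noWalk hα
  -- reachable set
  set R : Fin n → Prop := fun j => j = i ∨ ∃ ℓ : ℕ, 1 ≤ ℓ ∧
    ∃ w : ℕ → Fin n, w 0 = i ∧ w ℓ = j ∧ ∀ k < ℓ, B (w k) (w (k + 1)) ≠ 0 with hR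
  have hRrow : ∀ j, R j → ∑ m, B j m = 1 := by
    intro j hj
    rcases hj with rfl | ⟨ℓ, hℓ, w, hw0, hwℓ, hwe⟩
    · by_contra hne
      exact hiJ (lt_of_le_of_ne (hB.2 j) hne)
    · by_contra hne
      have hjJ : j ∈ Jhat B := lt_of_le_of_ne (hB.2 j) hne
      exact hNoWalk ℓ ⟨hℓ, w, hw0, hwe, hwℓ ▸ hjJ⟩
  have hRext : ∀ j m, R j → B j m ≠ 0 → R m := by
    intro j m hj hjm
    rcases hj with rfl | ⟨ℓ, hℓ, w, hw0, hwℓ, hwe⟩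
    · right
      refine ⟨1, le_refl 1, fun k => if k = 0 then j else m, by simp, by simp, ?_⟩
      intro k hk
      interval_cases k
      simpa using hjm
    · right
      refine ⟨ℓ + 1, by omega, fun k => if k ≤ ℓ then w k else m, ?_, ?_, ?_⟩
      · simp [hw0]
      · simp
      · intro k hk
        rcases lt_or_eq_of_le (Nat.lt_succ_iff.mp hk) with hkℓ | hkℓ
        · have h1 : k ≤ ℓ := hkℓ.le
          have h2 : k + 1 ≤ ℓ := hkℓ
          simpa [h1, h2] using hwe k hkℓ
        · subst hkℓ
          simpa [show ¬ (k + 1 ≤ k) by omega, hwℓ] using hjm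
  have key : ∀ k : ℕ, ∀ j, R j → ∑ l, (B ^ k) j l = 1 := by
    intro k
    induction k with
    | zero => intro j _; simp [Matrix.one_apply]
    | succ k ih =>
      intro j hj
      rw [pow_succ']
      calc ∑ l, (B * B ^ k) j l = ∑ m, B j m * ∑ l, (B ^ k) m l := by
            simp only [Matrix.mul_apply, Finset.mul_sum]
            rw [Finset.sum_comm]
        _ = ∑ m, B j m := by
            refine Finset.sum_congr rfl fun m _ => ?_
            by_cases hm : B j m = 0
            · simp [hm]
            · rw [ih m (hRext j m hj hm), mul_one]
        _ = 1 := hRrow j hj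
  intro k hk
  have hsub := substoch_pow hB k
  have habs : ∀ a l, |(B ^ k) a l| = (B ^ k) a l := fun a l => abs_of_nonneg (hsub.1 a l)
  have hrow : ∀ a : Fin n, ∑ l, |(B ^ k) a l| ≤ 1 := by
    intro a
    simp only [habs]
    exact hsub.2 a
  have hattain : ∑ l, |(B ^ k) i l| = 1 := by
    simp only [habs]
    exact key k i (Or.inl rfl)
  have hne : Nonempty (Fin n) := ⟨i⟩
  refine le_antisymm (ciSup_le hrow) ?_
  rw [← hattain]
  refine le_ciSup (f := fun a : Fin n => ∑ l, |(B ^ k) a l|) ?_ i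
  refine ⟨1, ?_⟩
  rintro x ⟨a, rfl⟩
  exact hrow a
end

section
/- Let B be a square substochastic matrix. The following are equivalent: (i) the index of contraction ĉon B is finite; (ii) B is convergent, i.e. B^k → 0 as k → ∞; (iii) I − B is nonsingular. -/
open Matrix Filter Finset

/-!
(i) ⇒ (ii): a walk from `i` into `Ĵ(B)` of length `ℓ` forces row `i` of `Bˡ⁺¹` to have sum `< 1`,
and row sums of `Bᵏ` decrease with `k`; so if `ĉon B < ∞`, a single power `Bᵐ` has all row sums
`< 1`, i.e. `‖Bᵐ‖_∞ < 1`, whence `Bᵏ → 0`.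
(ii) ⇒ (iii): a fixed vector of `B` is fixed by every `Bᵏ`, hence zero.
(iii) ⇒ (i): if some `i ∉ Ĵ(B)` cannot reach `Ĵ(B)`, the vertices that cannot reach `Ĵ(B)` form a
nonempty set `U` closed under edges, whose rows are stochastic. Then `1 - B` is block triangular
with respect to `U`, and its `U × U` block kills the all-ones vector, so `det (1 - B) = 0`.
-/

theorem Matrix.sum_mul_apply {l m n : Type*} [Fintype m] [Fintype n] (A : Matrix l m ℝ)
    (C : Matrix m n ℝ) (i : l) : ∑ j, (A * C) i j = ∑ k, A i k * ∑ j, C k j := by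
  simp only [mul_apply, Finset.mul_sum]
  exact Finset.sum_comm

theorem tendsto_pow_atTop_nhds_zero_of_norm_pow_lt_one {R : Type*} [SeminormedRing R] {x : R}
    {m : ℕ} (hm : m ≠ 0) (h : ‖x ^ m‖ < 1) : Tendsto (fun n : ℕ ↦ x ^ n) atTop (nhds 0) := by
  have hsplit : (fun n : ℕ ↦ x ^ n) = fun n ↦ x ^ (n % m) * (x ^ m) ^ (n / m) := by
    funext n
    rw [← pow_mul, ← pow_add, Nat.mod_add_div]
  have hbdd : IsBoundedUnder (· ≤ ·) atTop fun n : ℕ ↦ ‖x ^ (n % m)‖ :=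
    isBoundedUnder_of ⟨∑ r ∈ range m, ‖x ^ r‖, fun n ↦ single_le_sum
      (fun r _ ↦ norm_nonneg (x ^ r)) (mem_range.2 (Nat.mod_lt n (Nat.pos_of_ne_zero hm)))⟩
  rw [hsplit]
  exact isBoundedUnder_le_mul_tendsto_zero hbdd
    ((tendsto_pow_atTop_nhds_zero_of_norm_lt_one h).comp (Nat.tendsto_div_const_atTop hm))

theorem IsConvergent.isUnit_one_sub {V : Type*} [Fintype V] [DecidableEq V] {B : Matrix V V ℝ}
    (hB : IsConvergent B) : IsUnit (1 - B) := by
  rw [isUnit_iff_isUnit_det, isUnit_iff_ne_zero]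
  intro hdet
  obtain ⟨v, hv, hker⟩ := exists_mulVec_eq_zero_iff.2 hdet
  have hfix : B *ᵥ v = v := by
    rw [sub_mulVec, one_mulVec, sub_eq_zero] at hker
    exact hker.symm
  have hpow : ∀ k, (B ^ k) *ᵥ v = v := by
    intro k
    induction k with
    | zero => simp
    | succ k ih => rw [pow_succ', ← mulVec_mulVec, ih, hfix]
  have hlim : Tendsto (fun k ↦ (B ^ k) *ᵥ v) atTop (nhds ((0 : Matrix V V ℝ) *ᵥ v)) :=
    ((continuous_id.matrix_mulVec continuous_const).tendsto 0).comp hB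
  simp only [hpow, zero_mulVec] at hlim
  exact hv (tendsto_nhds_unique tendsto_const_nhds hlim)

theorem isWalkTo_one {V : Type*} {A : Matrix V V ℝ} {S : Set V} {i j : V} (hij : A i j ≠ 0)
    (hj : j ∈ S) : IsWalkTo A i S 1 :=
  ⟨le_rfl, fun s ↦ if s = 0 then i else j, rfl, fun k hk ↦ by simpa [Nat.lt_one_iff.1 hk],
    by simpa⟩

theorem IsWalkTo.cons {V : Type*} {A : Matrix V V ℝ} {S : Set V} {i j : V} {ℓ : ℕ}
    (hij : A i j ≠ 0) (h : IsWalkTo A j S ℓ) : IsWalkTo A i S (ℓ + 1) := by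
  obtain ⟨-, w, hw0, hedge, hend⟩ := h
  refine ⟨by omega, fun s ↦ Nat.casesOn s i w, rfl, ?_, hend⟩
  rintro (_ | k) hk
  · simpa [hw0] using hij
  · exact hedge k (by omega)

theorem conHat_ne_top_iff {V : Type*} [Fintype V] (B : Matrix V V ℝ) :
    conHat B ≠ ⊤ ↔ ∀ i ∉ Jhat B, ∃ ℓ, IsWalkTo B i (Jhat B) ℓ := by
  rw [conHat, Ne, ← Finset.sup_univ_eq_iSup, Finset.sup_eq_top_iff]
  push Not
  refine forall_congr' fun i ↦ ?_
  by_cases hi : i ∈ Jhat B <;> simp [hi]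

namespace IsSubstochastic

variable {V : Type*} [Fintype V] {B : Matrix V V ℝ}

theorem one [DecidableEq V] : IsSubstochastic (1 : Matrix V V ℝ) :=
  ⟨fun i j ↦ by by_cases h : i = j <;> simp [one_apply, h], fun i ↦ by simp [one_apply]⟩

theorem sum_mul_apply_le {l m n : Type*} [Fintype m] [Fintype n] {A : Matrix l m ℝ}
    {C : Matrix m n ℝ} (hA : IsSubstochastic A) (hC : IsSubstochastic C) (i : l) :
    ∑ j, (A * C) i j ≤ ∑ k, A i k := by
  rw [Matrix.sum_mul_apply]
  exact sum_le_sum fun k _ ↦ mul_le_of_le_one_right (hA.1 i k) (hC.2 k)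

theorem mul {l m n : Type*} [Fintype m] [Fintype n] {A : Matrix l m ℝ} {C : Matrix m n ℝ}
    (hA : IsSubstochastic A) (hC : IsSubstochastic C) : IsSubstochastic (A * C) :=
  ⟨fun i j ↦ sum_nonneg fun k _ ↦ mul_nonneg (hA.1 i k) (hC.1 k j),
    fun i ↦ (hA.sum_mul_apply_le hC i).trans (hA.2 i)⟩

theorem pow [DecidableEq V] (hB : IsSubstochastic B) (k : ℕ) : IsSubstochastic (B ^ k) := by
  induction k with
  | zero => exact one
  | succ k ih => exact pow_succ B k ▸ ih.mul hB

theorem sum_pow_apply_antitone [DecidableEq V] (hB : IsSubstochastic B) (i : V) :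
    Antitone fun k ↦ ∑ j, (B ^ k) i j :=
  antitone_nat_of_succ_le fun k ↦ pow_succ B k ▸ (hB.pow k).sum_mul_apply_le hB i

theorem sum_mul_apply_lt_one {A C : Matrix V V ℝ} (hA : IsSubstochastic A)
    (hC : IsSubstochastic C) {i t : V} (hit : A i t ≠ 0) (ht : ∑ j, C t j < 1) :
    ∑ j, (A * C) i j < 1 := by
  rw [Matrix.sum_mul_apply]
  calc ∑ k, A i k * ∑ j, C k j < ∑ k, A i k := by
        refine sum_lt_sum (fun k _ ↦ mul_le_of_le_one_right (hA.1 i k) (hC.2 k))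
          ⟨t, mem_univ t, ?_⟩
        exact mul_lt_of_lt_one_right ((hA.1 i t).lt_of_ne' hit) ht
    _ ≤ 1 := hA.2 i

theorem sum_pow_apply_lt_one_of_walk [DecidableEq V] (hB : IsSubstochastic B) {k ℓ : ℕ}
    {w : ℕ → V} (hedge : ∀ s < ℓ, B (w s) (w (s + 1)) ≠ 0) (hend : ∑ j, (B ^ k) (w ℓ) j < 1) :
    ∑ j, (B ^ (ℓ + k)) (w 0) j < 1 := by
  induction ℓ generalizing w with
  | zero => simpa using hend
  | succ ℓ ih =>
    have htail : ∑ j, (B ^ (ℓ + k)) (w 1) j < 1 :=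
      ih (w := fun s ↦ w (s + 1)) (fun s hs ↦ hedge (s + 1) (by omega)) hend
    rw [show ℓ + 1 + k = ℓ + k + 1 by omega, pow_succ']
    exact hB.sum_mul_apply_lt_one (hB.pow _) (hedge 0 (by omega)) htail

theorem sum_pow_apply_lt_one_of_isWalkTo [DecidableEq V] (hB : IsSubstochastic B) {i : V}
    {ℓ : ℕ} (h : IsWalkTo B i (Jhat B) ℓ) : ∑ j, (B ^ (ℓ + 1)) i j < 1 := by
  obtain ⟨-, w, rfl, hedge, hend⟩ := h
  exact hB.sum_pow_apply_lt_one_of_walk hedge (by simpa [Jhat] using hend)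

theorem exists_pow_sum_apply_lt_one [DecidableEq V] (hB : IsSubstochastic B)
    (hwalk : ∀ i ∉ Jhat B, ∃ ℓ, IsWalkTo B i (Jhat B) ℓ) :
    ∃ m ≠ 0, ∀ i, ∑ j, (B ^ m) i j < 1 := by
  classical
  choose! ℓ hℓ using hwalk
  refine ⟨univ.sup ℓ + 1, by omega, fun i ↦ ?_⟩
  by_cases hi : i ∈ Jhat B
  · refine (hB.sum_pow_apply_antitone i (by omega : 1 ≤ univ.sup ℓ + 1)).trans_lt ?_
    simpa [Jhat] using hi
  · have hle : ℓ i + 1 ≤ univ.sup ℓ + 1 := Nat.succ_le_succ (le_sup (mem_univ i))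
    exact (hB.sum_pow_apply_antitone i hle).trans_lt
      (hB.sum_pow_apply_lt_one_of_isWalkTo (hℓ i hi))

end IsSubstochastic

section LinftyOpNorm

attribute [local instance] Matrix.linftyOpNormedAddCommGroup Matrix.linftyOpNormedRing

theorem Matrix.linfty_opNorm_lt_one_of_nonneg {m n : Type*} [Fintype m] [Fintype n]
    {A : Matrix m n ℝ} (hA : ∀ i j, 0 ≤ A i j) (h : ∀ i, ∑ j, A i j < 1) : ‖A‖ < 1 := by
  rw [linfty_opNorm_def, ← NNReal.coe_one, NNReal.coe_lt_coe, Finset.sup_lt_iff zero_lt_one]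
  intro i _
  rw [← NNReal.coe_lt_coe]
  push_cast
  simpa only [Real.norm_of_nonneg (hA i _)] using h i

theorem IsSubstochastic.isConvergent_of_conHat_ne_top {V : Type*} [Fintype V] [DecidableEq V]
    {B : Matrix V V ℝ} (hB : IsSubstochastic B) (h : conHat B ≠ ⊤) : IsConvergent B := by
  obtain ⟨m, hm, hrow⟩ := hB.exists_pow_sum_apply_lt_one ((conHat_ne_top_iff B).1 h)
  exact tendsto_pow_atTop_nhds_zero_of_norm_pow_lt_one hm
    (linfty_opNorm_lt_one_of_nonneg (hB.pow m).1 hrow)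

end LinftyOpNorm

theorem det_one_sub_eq_zero_of_closed {V : Type*} [Fintype V] [DecidableEq V]
    {B : Matrix V V ℝ} {U : Set V} {i : V} (hi : i ∈ U)
    (hclosed : ∀ j ∈ U, ∀ t, B j t ≠ 0 → t ∈ U) (hrow : ∀ j ∈ U, ∑ t, B j t = 1) :
    (1 - B).det = 0 := by
  classical
  have hzero : ∀ j ∈ U, ∀ t ∉ U, (1 - B) j t = 0 := fun j hj t ht ↦ by
    have hjt : j ≠ t := fun h ↦ ht (h ▸ hj)
    simp [one_apply, hjt, not_not.1 (mt (hclosed j hj t) ht)]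
  rw [twoBlockTriangular_det' _ (· ∈ U) hzero, mul_eq_zero]
  left
  rw [← exists_mulVec_eq_zero_iff]
  refine ⟨fun _ ↦ 1, Function.ne_iff.2 ⟨⟨i, hi⟩, one_ne_zero⟩, funext fun a ↦ ?_⟩
  have hsum : ∑ b : U, (1 - B) a b = 0 := by
    rw [← Finset.sum_congr_set U _ _ (fun _ _ ↦ rfl) (hzero a a.2)]
    simp [Matrix.sub_apply, one_apply, sum_sub_distrib, hrow a a.2]
  simpa [mulVec, dotProduct, toSquareBlockProp, toBlock] using hsum

theorem IsSubstochastic.conHat_ne_top_of_isUnit_one_sub {V : Type*} [Fintype V] [DecidableEq V]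
    {B : Matrix V V ℝ} (hB : IsSubstochastic B) (hunit : IsUnit (1 - B)) : conHat B ≠ ⊤ := by
  rw [conHat_ne_top_iff]
  by_contra! ⟨i, hi, hnowalk⟩
  set U : Set V := {j | j ∉ Jhat B ∧ ∀ ℓ, ¬ IsWalkTo B j (Jhat B) ℓ}
  have hclosed : ∀ j ∈ U, ∀ t, B j t ≠ 0 → t ∈ U := fun j hj t hjt ↦
    ⟨fun ht ↦ hj.2 1 (isWalkTo_one hjt ht), fun ℓ hw ↦ hj.2 (ℓ + 1) (hw.cons hjt)⟩
  have hrow : ∀ j ∈ U, ∑ t, B j t = 1 := fun j hj ↦ le_antisymm (hB.2 j) (not_lt.1 hj.1)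
  have hdet : (1 - B).det = 0 :=
    det_one_sub_eq_zero_of_closed (U := U) ⟨hi, hnowalk⟩ hclosed hrow
  rw [isUnit_iff_isUnit_det, hdet] at hunit
  exact not_isUnit_zero hunit

theorem stmt3 {n : ℕ} (B : Matrix (Fin n) (Fin n) ℝ) (hB : IsSubstochastic B) :
    (conHat B ≠ ⊤ ↔ IsConvergent B) ∧
      (conHat B ≠ ⊤ ↔ IsUnit (1 - B)) := by
  have h12 : conHat B ≠ ⊤ → IsConvergent B := hB.isConvergent_of_conHat_ne_top
  have h23 : IsConvergent B → IsUnit (1 - B) := IsConvergent.isUnit_one_sub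
  have h31 : IsUnit (1 - B) → conHat B ≠ ⊤ := hB.conHat_ne_top_of_isUnit_one_sub
  exact ⟨⟨h12, h31 ∘ h23⟩, ⟨h23 ∘ h12, h31⟩⟩
end

section
/- Let B be a convergent square substochastic matrix that is block upper triangular with square diagonal blocks B_11, B_22, …, B_rr of orders n_1, …, n_r, each block being either irreducible or a 1×1 zero matrix. Then max_i ĉon B_ii ≤ ĉon B ≤ N + ĉon B_rr, where N := n_1 + ⋯ + n_{r−1} (with N = 0 when r = 1). -/
/-!
Lower bound: a row `a ∉ Ĵ(Bᵢᵢ)` already has mass one inside block `i`, so it has no edges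
leaving the block and is not in `Ĵ(B)`; hence a walk of `B` from such a row stays in block `i`
until it meets `Ĵ(Bᵢᵢ)`, which it must do before it can meet `Ĵ(B)`.

Upper bound: if some `Ĵ(Bᵢᵢ)` were empty, `Bᵢᵢ` would be stochastic, and so would the diagonal
block `Bᵢᵢᵏ` of `Bᵏ`, contradicting convergence. So by irreducibility (or trivially for a zero
block) every row of block `i` reaches `Ĵ(Bᵢᵢ)` in fewer than `nᵢ` steps. There the row of `B`
is either deficient or has an edge into a later block; descending through the blocks costs
at most `nᵢ` steps per block before the last, and at most `ĉon B_rr` steps in the last block,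
whose rows are full rows of `B`.
-/

open Matrix Filter Finset

/-- The `i`-th diagonal block of a matrix indexed by `Σ i, Fin (nsz i)`. -/
def diagBlock {r : ℕ} {nsz : Fin r → ℕ}
    (M : Matrix (Σ i, Fin (nsz i)) (Σ i, Fin (nsz i)) ℝ) (i : Fin r) :
    Matrix (Fin (nsz i)) (Fin (nsz i)) ℝ :=
  Matrix.of fun a b => M ⟨i, a⟩ ⟨i, b⟩

def Reaches {V : Type*} (A : Matrix V V ℝ) (i : V) (S : Set V) (ℓ : ℕ) : Prop :=
  ∃ w : ℕ → V, w 0 = i ∧ (∀ k < ℓ, A (w k) (w (k + 1)) ≠ 0) ∧ w ℓ ∈ S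

section Walks

variable {V W : Type*} {A : Matrix V V ℝ} {i : V} {S T : Set V} {ℓ : ℕ}

theorem isWalkTo_iff : IsWalkTo A i S ℓ ↔ 1 ≤ ℓ ∧ Reaches A i S ℓ := Iff.rfl

@[simp]
theorem reaches_zero_iff : Reaches A i S 0 ↔ i ∈ S :=
  ⟨fun ⟨w, hw0, _, hS⟩ => hw0 ▸ hS, fun h => ⟨fun _ => i, rfl, by simp, h⟩⟩

theorem reaches_succ_iff : Reaches A i S (ℓ + 1) ↔ ∃ j, A i j ≠ 0 ∧ Reaches A j S ℓ := by
  constructor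
  · rintro ⟨w, rfl, hw, hS⟩
    exact ⟨w 1, hw 0 (by omega), fun k => w (k + 1), rfl,
      fun k hk => hw (k + 1) (by omega), hS⟩
  · rintro ⟨j, hij, w, rfl, hw, hS⟩
    refine ⟨fun k => if k = 0 then i else w (k - 1), rfl, fun k hk => ?_, by simpa using hS⟩
    rcases k with _ | k
    · simpa using hij
    · simpa using hw k (by omega)

theorem Reaches.mono (h : Reaches A i S ℓ) (hST : S ⊆ T) : Reaches A i T ℓ :=
  let ⟨w, hw0, hw, hS⟩ := h
  ⟨w, hw0, hw, hST hS⟩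

theorem Reaches.trans {e n : ℕ} (h : Reaches A i T e)
    (hT : ∀ j ∈ T, ∃ f ≤ n, Reaches A j S f) : ∃ ℓ ≤ e + n, Reaches A i S ℓ := by
  induction e generalizing i with
  | zero =>
    obtain ⟨f, hf, hj⟩ := hT i (reaches_zero_iff.mp h)
    exact ⟨f, by omega, hj⟩
  | succ e ih =>
    obtain ⟨j, hij, hj⟩ := reaches_succ_iff.mp h
    obtain ⟨ℓ, hℓ, hjS⟩ := ih hj
    exact ⟨ℓ + 1, by omega, reaches_succ_iff.mpr ⟨j, hij, hjS⟩⟩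

theorem reaches_segment {w : ℕ → V} (hw : ∀ k < ℓ, A (w k) (w (k + 1)) ≠ 0) {s t : ℕ}
    (hst : s ≤ t) (ht : t ≤ ℓ) : Reaches A (w s) {w t} (t - s) :=
  ⟨fun k => w (s + k), rfl, fun k hk => hw (s + k) (by omega),
    by simp [Nat.add_sub_cancel' hst]⟩

/-- Pigeonhole: a walk of length at least `|V|` revisits a vertex, and the cycle in between
can be cut out. -/
theorem Reaches.exists_lt_card [Fintype V] (h : Reaches A i S ℓ) :
    ∃ ℓ' < Fintype.card V, Reaches A i S ℓ' := by
  induction ℓ using Nat.strong_induction_on with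
  | _ ℓ ih =>
    by_cases hℓ : ℓ < Fintype.card V
    · exact ⟨ℓ, hℓ, h⟩
    obtain ⟨w, rfl, hw, hS⟩ := h
    obtain ⟨s, t, hst, hwst⟩ := Fintype.exists_ne_map_eq_of_card_lt (fun k : Fin (ℓ + 1) => w k)
      (by simp only [Fintype.card_fin]; omega)
    wlog hlt : s < t generalizing s t
    · exact this t s hst.symm hwst.symm (lt_of_le_of_ne (not_lt.mp hlt) hst.symm)
    have hprefix := reaches_segment hw (Nat.zero_le s) (by omega)
    have hsuffix := (reaches_segment hw (Nat.lt_succ_iff.mp t.isLt) le_rfl).mono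
      (Set.singleton_subset_iff.mpr hS)
    obtain ⟨ℓ', hℓ', h'⟩ := hprefix.trans (n := ℓ - t) fun j hj => ⟨ℓ - t, le_rfl,
      (Set.mem_singleton_iff.mp hj).trans hwst ▸ hsuffix⟩
    exact ih ℓ' (by have := Fin.lt_def.mp hlt; omega) h'

theorem IsIrreducibleMat.exists_reaches_lt_card [Fintype V] {B : Matrix V V ℝ}
    (hB : IsIrreducibleMat B) (hS : S.Nonempty) (i : V) : ∃ ℓ < Fintype.card V, Reaches B i S ℓ :=
  let ⟨t, ht⟩ := hS
  let ⟨_, _, w, hw0, hwℓ, hw⟩ := hB i t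
  Reaches.exists_lt_card ⟨w, hw0, hw, hwℓ ▸ ht⟩

theorem Reaches.of_submatrix {f : W → V} {a : W} {T : Set W}
    (h : Reaches (A.submatrix f f) a T ℓ) (hT : ∀ b ∈ T, f b ∈ S) : Reaches A (f a) S ℓ :=
  let ⟨w, hw0, hw, hT'⟩ := h
  ⟨f ∘ w, by simp [hw0], hw, hT _ hT'⟩

theorem Reaches.exists_le_of_submatrix {f : W → V} {T : Set W}
    (hf : ∀ a ∉ T, f a ∉ S ∧ ∀ v, A (f a) v ≠ 0 → v ∈ Set.range f) {a : W}
    (h : Reaches A (f a) S ℓ) : ∃ ℓ' ≤ ℓ, Reaches (A.submatrix f f) a T ℓ' := by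
  induction ℓ generalizing a with
  | zero => exact ⟨0, le_rfl, reaches_zero_iff.mpr
      (not_not.mp fun ha => (hf a ha).1 (reaches_zero_iff.mp h))⟩
  | succ ℓ ih =>
    by_cases ha : a ∈ T
    · exact ⟨0, by omega, reaches_zero_iff.mpr ha⟩
    obtain ⟨v, hav, hv⟩ := reaches_succ_iff.mp h
    obtain ⟨b, rfl⟩ := (hf a ha).2 v hav
    obtain ⟨ℓ', hℓ', hb⟩ := ih hv
    exact ⟨ℓ' + 1, by omega, reaches_succ_iff.mpr ⟨b, hav, hb⟩⟩

end Walks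

section IndexOfContraction

variable {V W : Type*} [Fintype V] {A : Matrix V V ℝ}

theorem biInf_natCast_le_iff {s : Set ℕ} {n : ℕ} :
    ⨅ ℓ ∈ s, (ℓ : ℕ∞) ≤ n ↔ ∃ ℓ ∈ s, ℓ ≤ n := by
  rw [← ENat.lt_add_one_iff (ENat.natCast_ne_top n)]
  simp only [iInf_lt_iff, exists_prop]
  norm_cast
  simp only [Nat.lt_succ_iff]

theorem conHat_le_natCast_iff {n : ℕ} :
    conHat A ≤ n ↔ ∀ i, ∃ ℓ ≤ n, Reaches A i (Jhat A) ℓ := by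
  simp only [conHat, iSup₂_le_iff, Set.mem_compl_iff]
  refine forall_congr' fun i => ?_
  rw [imp_congr_right fun _ => biInf_natCast_le_iff]
  simp only [Set.mem_ofPred_eq, isWalkTo_iff]
  refine ⟨fun h => ?_, fun h hi => ?_⟩
  · by_cases hi : i ∈ Jhat A
    · exact ⟨0, Nat.zero_le n, reaches_zero_iff.mpr hi⟩
    · obtain ⟨ℓ, ⟨-, hℓ⟩, hn⟩ := h hi
      exact ⟨ℓ, hn, hℓ⟩
  · obtain ⟨ℓ, hn, hℓ⟩ := h
    refine ⟨ℓ, ⟨Nat.one_le_iff_ne_zero.mpr ?_, hℓ⟩, hn⟩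
    rintro rfl
    exact hi (reaches_zero_iff.mp hℓ)

theorem conHat_submatrix_le [Fintype W] (f : W → V)
    (hf : ∀ a ∉ Jhat (A.submatrix f f), f a ∉ Jhat A ∧ ∀ v, A (f a) v ≠ 0 → v ∈ Set.range f) :
    conHat (A.submatrix f f) ≤ conHat A := by
  refine iSup₂_le fun a ha => le_trans ?_ (le_iSup₂_of_le (f a) (hf a ha).1 le_rfl)
  refine le_iInf₂ fun ℓ hℓ => ?_
  obtain ⟨ℓ', hℓ', h'⟩ := Reaches.exists_le_of_submatrix hf hℓ.2
  have h1 : 1 ≤ ℓ' :=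
    Nat.one_le_iff_ne_zero.mpr (by rintro rfl; exact ha (reaches_zero_iff.mp h'))
  exact (iInf₂_le ℓ' ⟨h1, h'⟩).trans (by exact_mod_cast hℓ')

end IndexOfContraction

section Convergence

variable {V : Type*} [Fintype V] [DecidableEq V] {B : Matrix V V ℝ}

theorem not_isConvergent_of_mem_rowStochastic [Nonempty V] (hB : B ∈ rowStochastic ℝ V) :
    ¬ IsConvergent B := by
  intro hconv
  obtain ⟨i⟩ := ‹Nonempty V›
  have hrow : Continuous fun X : Matrix V V ℝ => ∑ j, X i j := by fun_prop
  have := (hrow.tendsto 0).comp hconv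
  simp only [Function.comp_def, sum_row_of_mem_rowStochastic (pow_mem hB _)] at this
  exact one_ne_zero (tendsto_nhds_unique tendsto_const_nhds (this.trans (by simp)))

theorem IsSubstochastic.jhat_nonempty [Nonempty V] (hB : IsSubstochastic B)
    (hconv : IsConvergent B) : (Jhat B).Nonempty := by
  by_contra hJ
  refine not_isConvergent_of_mem_rowStochastic (mem_rowStochastic_iff_sum.mpr ⟨hB.1, fun i => ?_⟩)
    hconv
  exact le_antisymm (hB.2 i) (not_lt.mp fun hi => hJ ⟨i, hi⟩)

theorem IsSubstochastic.exists_reaches_jhat_lt_card (hB : IsSubstochastic B)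
    (hconv : IsConvergent B) (hirr : IsIrreducibleMat B ∨ B = 0) (a : V) :
    ∃ e < Fintype.card V, Reaches B a (Jhat B) e := by
  have : Nonempty V := ⟨a⟩
  rcases hirr with hirr | rfl
  · exact hirr.exists_reaches_lt_card (hB.jhat_nonempty hconv) a
  · exact ⟨0, Fintype.card_pos, reaches_zero_iff.mpr (by simp [Jhat])⟩

end Convergence

section Blocks

variable {ι : Type*} [Fintype ι] [DecidableEq ι] {κ : ι → Type*} [∀ i, Fintype (κ i)]
  {M : Matrix (Σ i, κ i) (Σ i, κ i) ℝ}

theorem sum_row_sigma_eq (x : Σ i, κ i) (i : ι) :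
    ∑ v, M x v = ∑ b, M x ⟨i, b⟩ + ∑ j ∈ univ.erase i, ∑ b, M x ⟨j, b⟩ := by
  rw [← univ_sigma_univ, sum_sigma, ← add_sum_erase univ _ (mem_univ i)]

theorem mem_jhat_iff_of_offDiag_eq_zero {i : ι} {a : κ i}
    (h : ∀ v : Σ i, κ i, v.1 ≠ i → M ⟨i, a⟩ v = 0) :
    ⟨i, a⟩ ∈ Jhat M ↔ a ∈ Jhat (M.submatrix (Sigma.mk i) (Sigma.mk i)) := by
  have hrest : ∑ j ∈ univ.erase i, ∑ b, M ⟨i, a⟩ ⟨j, b⟩ = 0 :=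
    sum_eq_zero fun j hj => sum_eq_zero fun b _ => h ⟨j, b⟩ (ne_of_mem_erase hj)
  simp only [Jhat, Set.mem_ofPred_eq, sum_row_sigma_eq ⟨i, a⟩ i, hrest, add_zero,
    submatrix_apply]

theorem IsSubstochastic.submatrix_sigmaMk (hM : IsSubstochastic M) (i : ι) :
    IsSubstochastic (M.submatrix (Sigma.mk i) (Sigma.mk i)) := by
  refine ⟨fun _ _ => hM.1 _ _, fun a => le_trans ?_ (hM.2 ⟨i, a⟩)⟩
  simp only [submatrix_apply]
  rw [sum_row_sigma_eq ⟨i, a⟩ i, le_add_iff_nonneg_right]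
  exact sum_nonneg fun j _ => sum_nonneg fun b _ => hM.1 _ _

/-- A row outside `Ĵ` of a diagonal block already carries the full mass one of the row
of `M`, so it has no entries outside its block. -/
theorem IsSubstochastic.offDiag_eq_zero_of_notMem_jhat (hM : IsSubstochastic M) {i : ι} {a : κ i}
    (ha : a ∉ Jhat (M.submatrix (Sigma.mk i) (Sigma.mk i))) (v : Σ i, κ i) (hv : v.1 ≠ i) :
    M ⟨i, a⟩ v = 0 := by
  have hnonneg : ∀ j, 0 ≤ ∑ b, M ⟨i, a⟩ ⟨j, b⟩ := fun j => sum_nonneg fun b _ => hM.1 _ _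
  have hblock : 1 ≤ ∑ b, M ⟨i, a⟩ ⟨i, b⟩ := not_lt.mp ha
  have hrest : ∑ j ∈ univ.erase i, ∑ b, M ⟨i, a⟩ ⟨j, b⟩ = 0 := by
    have := sum_row_sigma_eq (M := M) ⟨i, a⟩ i
    linarith [hM.2 ⟨i, a⟩, sum_nonneg fun j (_ : j ∈ univ.erase i) => hnonneg j]
  obtain ⟨j, b⟩ := v
  have hj := (sum_eq_zero_iff_of_nonneg fun j _ => hnonneg j).mp hrest j
    (mem_erase.mpr ⟨hv, mem_univ j⟩)
  exact (sum_eq_zero_iff_of_nonneg fun b _ => hM.1 _ _).mp hj b (mem_univ b)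

theorem IsSubstochastic.conHat_submatrix_sigmaMk_le (hM : IsSubstochastic M) (i : ι) :
    conHat (M.submatrix (Sigma.mk i) (Sigma.mk i)) ≤ conHat M := by
  refine conHat_submatrix_le _ fun a ha => ⟨?_, fun v hv => ?_⟩
  · rwa [mem_jhat_iff_of_offDiag_eq_zero (hM.offDiag_eq_zero_of_notMem_jhat ha)]
  · obtain ⟨j, b⟩ := v
    obtain rfl : j = i := not_not.mp fun hj => hv (hM.offDiag_eq_zero_of_notMem_jhat ha _ hj)
    exact ⟨b, rfl⟩

end Blocks

section BlockTriangular

variable {ι : Type*} [Fintype ι] [LinearOrder ι] {κ : ι → Type*} [∀ i, Fintype (κ i)]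

theorem Matrix.BlockTriangular.submatrix_sigmaMk_mul {R : Type*} [NonUnitalNonAssocSemiring R]
    {M N : Matrix (Σ i, κ i) (Σ i, κ i) R} (hM : M.BlockTriangular Sigma.fst)
    (hN : N.BlockTriangular Sigma.fst) (i : ι) :
    (M * N).submatrix (Sigma.mk i) (Sigma.mk i) =
      M.submatrix (Sigma.mk i) (Sigma.mk i) * N.submatrix (Sigma.mk i) (Sigma.mk i) := by
  ext a c
  simp only [submatrix_apply, mul_apply]
  rw [← univ_sigma_univ, sum_sigma]
  refine sum_eq_single i (fun j _ hj => sum_eq_zero fun b _ => ?_) (by simp)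
  rcases lt_or_gt_of_ne hj with h | h
  · rw [hM h, zero_mul]
  · rw [hN h, mul_zero]

theorem Matrix.BlockTriangular.submatrix_sigmaMk_pow [DecidableEq ι] [∀ i, DecidableEq (κ i)]
    {R : Type*} [Semiring R]
    {M : Matrix (Σ i, κ i) (Σ i, κ i) R} (hM : M.BlockTriangular Sigma.fst) (i : ι) (k : ℕ) :
    (M ^ k).submatrix (Sigma.mk i) (Sigma.mk i) = M.submatrix (Sigma.mk i) (Sigma.mk i) ^ k := by
  induction k with
  | zero => exact submatrix_one _ sigma_mk_injective
  | succ k ih => rw [pow_succ, (hM.pow k).submatrix_sigmaMk_mul hM, ih, pow_succ]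

theorem IsConvergent.submatrix_sigmaMk [DecidableEq ι] [∀ i, DecidableEq (κ i)]
    {M : Matrix (Σ i, κ i) (Σ i, κ i) ℝ} (hconv : IsConvergent M)
    (hM : M.BlockTriangular Sigma.fst) (i : ι) :
    IsConvergent (M.submatrix (Sigma.mk i) (Sigma.mk i)) := by
  have hsub : Continuous fun X : Matrix (Σ i, κ i) (Σ i, κ i) ℝ =>
      X.submatrix (Sigma.mk i) (Sigma.mk i) := continuous_id.matrix_submatrix _ _
  have := (hsub.tendsto 0).comp hconv
  simpa [IsConvergent, Function.comp_def, hM.submatrix_sigmaMk_pow] using this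

end BlockTriangular

section UpperBound

variable {ι : Type*} [Fintype ι] [DecidableEq ι] [LinearOrder ι]

theorem add_sum_filter_le {n : ι → ℕ} {t i j : ι} (hij : i < j) (hi : i ≠ t) :
    n i + ∑ k ∈ univ.filter (fun k => j ≤ k ∧ k ≠ t), n k ≤
      ∑ k ∈ univ.filter (fun k => i ≤ k ∧ k ≠ t), n k := by
  rw [← sum_insert (by simp [not_le.mpr hij])]
  refine sum_le_sum_of_subset fun k hk => ?_
  simp only [mem_insert, mem_filter, mem_univ, true_and] at hk ⊢
  rcases hk with rfl | ⟨hjk, hkt⟩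
  · exact ⟨le_rfl, hi⟩
  · exact ⟨hij.le.trans hjk, hkt⟩

variable [OrderTop ι] {κ : ι → Type*} [∀ i, Fintype (κ i)]
  {M : Matrix (Σ i, κ i) (Σ i, κ i) ℝ}

/-- From a row of block `i`, walk inside the block to its `Ĵ` in fewer than `|κ i|` steps;
there either the row of `M` is already deficient, or it leaks into a later block. -/
theorem exists_reaches_jhat_le_sum_card_add (htri : M.BlockTriangular Sigma.fst)
    (hdiag : ∀ i ≠ ⊤, ∀ a : κ i, ∃ e < Fintype.card (κ i),
      Reaches (M.submatrix (Sigma.mk i) (Sigma.mk i)) a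
        (Jhat (M.submatrix (Sigma.mk i) (Sigma.mk i))) e)
    {c : ℕ} (htop : conHat (M.submatrix (Sigma.mk (⊤ : ι)) (Sigma.mk ⊤)) ≤ c)
    (v : Σ i, κ i) :
    ∃ ℓ ≤ (∑ j ∈ univ.filter (fun j => v.1 ≤ j ∧ j ≠ ⊤), Fintype.card (κ j)) + c,
      Reaches M v (Jhat M) ℓ := by
  obtain ⟨i, a⟩ := v
  induction i using WellFoundedGT.induction with
  | _ i ih =>
  dsimp only
  by_cases hi : i = ⊤
  · subst hi
    obtain ⟨ℓ, hℓ, h⟩ := conHat_le_natCast_iff.mp htop a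
    refine ⟨ℓ, by omega, h.of_submatrix fun b hb => ?_⟩
    exact (mem_jhat_iff_of_offDiag_eq_zero fun v hv => htri (lt_of_le_of_ne le_top hv)).mpr hb
  have hcard := add_sum_filter_le (n := fun j => Fintype.card (κ j)) (lt_top_iff_ne_top.mpr hi) hi
  obtain ⟨e, he, h⟩ := hdiag i hi a
  have hleave : ∀ v ∈ Sigma.mk i '' Jhat (M.submatrix (Sigma.mk i) (Sigma.mk i)),
      ∃ f ≤ (∑ j ∈ univ.filter (fun j => i ≤ j ∧ j ≠ ⊤), Fintype.card (κ j)) + c - e,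
        Reaches M v (Jhat M) f := by
    rintro _ ⟨u, hu, rfl⟩
    by_cases huM : ⟨i, u⟩ ∈ Jhat M
    · exact ⟨0, Nat.zero_le _, reaches_zero_iff.mpr huM⟩
    obtain ⟨⟨j, b⟩, hji, hub⟩ : ∃ v : Σ i, κ i, v.1 ≠ i ∧ M ⟨i, u⟩ v ≠ 0 := by
      by_contra! h
      exact huM ((mem_jhat_iff_of_offDiag_eq_zero h).mpr hu)
    have hij : i < j :=
      lt_of_le_of_ne (not_lt.mp fun h => hub (htri (i := ⟨i, u⟩) (j := ⟨j, b⟩) h)) (Ne.symm hji)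
    obtain ⟨ℓ, hℓ, hb⟩ := ih j hij b
    dsimp only at hℓ
    have := add_sum_filter_le (n := fun j => Fintype.card (κ j)) hij hi
    exact ⟨ℓ + 1, by omega, reaches_succ_iff.mpr ⟨⟨j, b⟩, hub, hb⟩⟩
  obtain ⟨ℓ, hℓ, h⟩ := (h.of_submatrix fun b => Set.mem_image_of_mem _).trans hleave
  exact ⟨ℓ, by omega, h⟩

theorem conHat_le_sum_card_add_conHat_top (htri : M.BlockTriangular Sigma.fst)
    (hdiag : ∀ i ≠ ⊤, ∀ a : κ i, ∃ e < Fintype.card (κ i),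
      Reaches (M.submatrix (Sigma.mk i) (Sigma.mk i)) a
        (Jhat (M.submatrix (Sigma.mk i) (Sigma.mk i))) e) :
    conHat M ≤ (∑ j ∈ univ.erase ⊤, Fintype.card (κ j) : ℕ) +
      conHat (M.submatrix (Sigma.mk (⊤ : ι)) (Sigma.mk ⊤)) := by
  cases hc : conHat (M.submatrix (Sigma.mk (⊤ : ι)) (Sigma.mk ⊤)) using ENat.recTopCoe with
  | top => simp
  | coe c =>
    rw [← Nat.cast_add, conHat_le_natCast_iff]
    intro v
    obtain ⟨ℓ, hℓ, h⟩ := exists_reaches_jhat_le_sum_card_add htri hdiag hc.le v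
    refine ⟨ℓ, hℓ.trans (Nat.add_le_add_right (sum_le_sum_of_subset fun k hk => ?_) c), h⟩
    simp only [mem_filter, mem_univ, true_and, mem_erase, and_true] at hk ⊢
    exact hk.2

end UpperBound

theorem stmt6_general {r : ℕ} (nsz : Fin (r + 1) → ℕ)
    (M : Matrix (Σ i, Fin (nsz i)) (Σ i, Fin (nsz i)) ℝ)
    (hM : IsSubstochastic M)
    (htri : ∀ a b : Σ i, Fin (nsz i), b.1 < a.1 → M a b = 0)
    (hblocks : ∀ i, IsIrreducibleMat (diagBlock M i) ∨
      (nsz i = 1 ∧ diagBlock M i = 0))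
    (hconv : IsConvergent M) :
    (⨆ i, conHat (diagBlock M i)) ≤ conHat M ∧
      conHat M ≤ (∑ i ∈ Finset.univ.erase (Fin.last r), nsz i : ℕ) +
        conHat (diagBlock M (Fin.last r)) := by
  have hblockTri : M.BlockTriangular Sigma.fst := fun a b => htri a b
  refine ⟨iSup_le fun i => hM.conHat_submatrix_sigmaMk_le i, ?_⟩
  have hdiag (i : Fin (r + 1)) (a : Fin (nsz i)) :
      ∃ e < Fintype.card (Fin (nsz i)), Reaches (diagBlock M i) a (Jhat (diagBlock M i)) e :=
    (hM.submatrix_sigmaMk i).exists_reaches_jhat_lt_card (hconv.submatrix_sigmaMk hblockTri i)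
      ((hblocks i).imp_right And.right) a
  have hupper := conHat_le_sum_card_add_conHat_top hblockTri fun i _ => hdiag i
  simp only [Fintype.card_fin] at hupper
  exact hupper

theorem stmt6 {r : ℕ} (nsz : Fin (r + 1) → ℕ) (hnsz : ∀ i, 0 < nsz i)
    (M : Matrix (Σ i, Fin (nsz i)) (Σ i, Fin (nsz i)) ℝ)
    (hM : IsSubstochastic M)
    (htri : ∀ a b : Σ i, Fin (nsz i), b.1 < a.1 → M a b = 0)
    (hblocks : ∀ i, IsIrreducibleMat (diagBlock M i) ∨
      (nsz i = 1 ∧ diagBlock M i = 0))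
    (hconv : IsConvergent M) :
    (⨆ i, conHat (diagBlock M i)) ≤ conHat M ∧
      conHat M ≤ (∑ i ∈ Finset.univ.erase (Fin.last r), nsz i : ℕ) +
        conHat (diagBlock M (Fin.last r)) :=
  stmt6_general nsz M hM htri hblocks hconv
end

section
/- Let B be a square substochastic matrix, let i be a row with i ∉ Ĵ(B), and let k be a positive integer. Then i ∈ Ĵ(B^k) if and only if there exists a walk p ∈ P̂_i(B) with |p| < k. -/
open Matrix Filter Finset

lemma aux_pow_nonneg {n : ℕ} {B : Matrix (Fin n) (Fin n) ℝ} (hB : IsSubstochastic B) :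
    ∀ k i j, 0 ≤ (B ^ k) i j := by
  intro k
  induction k with
  | zero => intro i j; simp [Matrix.one_apply]; positivity
  | succ k ih =>
    intro i j
    rw [pow_succ']
    simp only [Matrix.mul_apply]
    exact Finset.sum_nonneg fun l _ => mul_nonneg (hB.1 i l) (ih l j)

lemma aux_pow_rowsum {n : ℕ} {B : Matrix (Fin n) (Fin n) ℝ} (hB : IsSubstochastic B) :
    ∀ k i, ∑ j, (B ^ k) i j ≤ 1 := by
  intro k
  induction k with
  | zero => intro i; simp [Matrix.one_apply]
  | succ k ih =>
    intro i
    rw [pow_succ']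
    simp only [Matrix.mul_apply]
    rw [Finset.sum_comm]
    calc ∑ l, ∑ j, B i l * (B ^ k) l j
        = ∑ l, B i l * ∑ j, (B ^ k) l j := by simp [Finset.mul_sum]
      _ ≤ ∑ l, B i l * 1 := Finset.sum_le_sum fun l _ =>
          mul_le_mul_of_nonneg_left (ih l) (hB.1 i l)
      _ ≤ 1 := by simpa using hB.2 i

lemma aux_main {n : ℕ} {B : Matrix (Fin n) (Fin n) ℝ} (hB : IsSubstochastic B) :
    ∀ k, 1 ≤ k → ∀ i, ∑ j, (B ^ k) i j < 1 ↔
      (∑ j, B i j < 1 ∨ ∃ ℓ : ℕ, IsWalkTo B i (Jhat B) ℓ ∧ ℓ < k) := by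
  intro k
  induction k with
  | zero => omega
  | succ k ih =>
    intro _ i
    rcases Nat.eq_zero_or_pos k with hk0 | hk1
    · subst hk0
      simp only [zero_add, pow_one]
      constructor
      · intro h; exact Or.inl h
      · rintro (h | ⟨ℓ, ⟨h1, _⟩, h2⟩)
        · exact h
        · omega
    · -- k ≥ 1
      have key : ∑ j, (B ^ (k+1)) i j < 1 ↔
          (∑ l, B i l < 1 ∨ ∃ l, B i l ≠ 0 ∧ ∑ j, (B ^ k) l j < 1) := by
        have hS : ∀ l, ∑ j, (B ^ k) l j ≤ 1 := aux_pow_rowsum hB k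
        have hrw : ∑ j, (B ^ (k+1)) i j = ∑ l, B i l * ∑ j, (B ^ k) l j := by
          rw [pow_succ']
          simp only [Matrix.mul_apply]
          rw [Finset.sum_comm]
          simp [Finset.mul_sum]
        rw [hrw]
        constructor
        · intro h
          by_contra hc
          push_neg at hc
          obtain ⟨h1, h2⟩ := hc
          have h1' : ∑ l, B i l = 1 := le_antisymm (hB.2 i) h1
          have : (1:ℝ) ≤ ∑ l, B i l * ∑ j, (B ^ k) l j := by
            rw [← h1']
            apply Finset.sum_le_sum
            intro l _
            rcases eq_or_ne (B i l) 0 with h0 | h0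
            · simp [h0]
            · have := h2 l h0
              nlinarith [hB.1 i l]
          linarith
        · rintro (h | ⟨l0, hl0, hl0'⟩)
          · calc ∑ l, B i l * ∑ j, (B ^ k) l j
                ≤ ∑ l, B i l * 1 := Finset.sum_le_sum fun l _ =>
                  mul_le_mul_of_nonneg_left (hS l) (hB.1 i l)
              _ < 1 := by simpa using h
          · have hpos : 0 < B i l0 := lt_of_le_of_ne (hB.1 i l0) (Ne.symm hl0)
            calc ∑ l, B i l * ∑ j, (B ^ k) l j
                < ∑ l, B i l := by
                  apply Finset.sum_lt_sum
                  · intro l _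
                    exact mul_le_of_le_one_right (hB.1 i l) (hS l)
                  · exact ⟨l0, Finset.mem_univ l0, by nlinarith⟩
              _ ≤ 1 := hB.2 i
      rw [key]
      constructor
      · rintro (h | ⟨l, hl, hl'⟩)
        · exact Or.inl h
        · rcases (ih hk1 l).1 hl' with h | ⟨ℓ, ⟨hℓ1, w, hw0, hwe, hwJ⟩, hℓk⟩
          · -- l ∈ Jhat, walk of length 1 from i
            refine Or.inr ⟨1, ⟨le_refl 1, fun m => if m = 0 then i else l, rfl, ?_, h⟩, by omega⟩
            intro m hm
            interval_cases m
            exact hl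
          · -- prepend edge i → l
            refine Or.inr ⟨ℓ + 1, ⟨by omega,
              fun m => if m = 0 then i else w (m - 1), rfl, ?_, ?_⟩, by omega⟩
            · intro m hm
              rcases Nat.eq_zero_or_pos m with h0 | h0
              · subst h0; simpa [hw0] using hl
              · have : m - 1 < ℓ := by omega
                have := hwe (m - 1) this
                simp only [Nat.add_sub_cancel]
                rw [if_neg (by omega), if_neg (by omega)]
                have hm1 : m - 1 + 1 = m := by omega
                rwa [hm1] at this
            · show (if ℓ + 1 = 0 then i else w (ℓ + 1 - 1)) ∈ Jhat B
              rw [if_neg (Nat.succ_ne_zero ℓ)]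
              exact hwJ
      · rintro (h | ⟨ℓ, ⟨hℓ1, w, hw0, hwe, hwJ⟩, hℓk⟩)
        · exact Or.inl h
        · refine Or.inr ⟨w 1, by rw [← hw0]; exact hwe 0 (by omega), ?_⟩
          rcases Nat.lt_or_ge ℓ 2 with h2 | h2
          · -- ℓ = 1, so w 1 ∈ Jhat
            have hℓ : ℓ = 1 := by omega
            subst hℓ
            rcases Nat.eq_zero_or_pos k with h0 | h0
            · omega
            · -- w 1 ∈ Jhat B, and row sums of B^k from a Jhat vertex... 
              -- use ih backward: k ≥ 1 so (ih) with Or.inl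
              exact (ih hk1 (w 1)).2 (Or.inl hwJ)
          · -- shift walk
            apply (ih hk1 (w 1)).2
            refine Or.inr ⟨ℓ - 1, ⟨by omega, fun m => w (m + 1), rfl, ?_, ?_⟩, by omega⟩
            · intro m hm
              exact hwe (m + 1) (by omega)
            · show w (ℓ - 1 + 1) ∈ Jhat B
              have h' : ℓ - 1 + 1 = ℓ := by omega
              rw [h']; exact hwJ

theorem stmt11 {n : ℕ} (B : Matrix (Fin n) (Fin n) ℝ) (hB : IsSubstochastic B)
    (i : Fin n) (hi : i ∉ Jhat B) (k : ℕ) (hk : 1 ≤ k) :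
    i ∈ Jhat (B ^ k) ↔ ∃ ℓ : ℕ, IsWalkTo B i (Jhat B) ℓ ∧ ℓ < k := by
  have := aux_main hB k hk i
  simp only [Jhat, Set.mem_setOf_eq] at *
  rw [this]
  constructor
  · rintro (h | h)
    · exact absurd h hi
    · exact h
  · exact Or.inr
end

section
/- Let A = (a_ij) be an n×n weakly diagonally dominant L₀-matrix and let D = (d_ij) be an n×n diagonal matrix whose diagonal entries are positive and satisfy d_ii ≤ 1/a_ii for each i with a_ii ≠ 0. Then B := I − DA is a substochastic matrix and con A = ĉon B. -/
open Matrix Filter Finset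

/-- `J(A)`: the set of rows of a square matrix that are strictly diagonally dominant. -/
def Jdom {n : Type*} [Fintype n] [DecidableEq n] (A : Matrix n n ℝ) : Set n :=
  {i | ∑ j ∈ Finset.univ.erase i, |A i j| < |A i i|}

/-- `A` is weakly diagonally dominant (w.d.d.). -/
def IsWDD {n : Type*} [Fintype n] [DecidableEq n] (A : Matrix n n ℝ) : Prop :=
  ∀ i, ∑ j ∈ Finset.univ.erase i, |A i j| ≤ |A i i|

/-- The index of connectivity `con A ∈ ℕ∞`. -/
noncomputable def conn {n : Type*} [Fintype n] [DecidableEq n] (A : Matrix n n ℝ) : ℕ∞ :=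
  ⨆ i ∈ (Jdom A)ᶜ, ⨅ ℓ ∈ {ℓ : ℕ | IsWalkTo A i (Jdom A) ℓ}, (ℓ : ℕ∞)

/-- `A` is weakly chained diagonally dominant (w.c.d.d.). -/
def IsWCDD {n : Type*} [Fintype n] [DecidableEq n] (A : Matrix n n ℝ) : Prop :=
  IsWDD A ∧ (Jdom A).Nonempty ∧ ∀ i ∉ Jdom A, ∃ ℓ : ℕ, IsWalkTo A i (Jdom A) ℓ

lemma offdiag_walk {V : Type*} (M : Matrix V V ℝ) {i : V} {S : Set V}
    (hi : i ∉ S) : ∀ ℓ : ℕ, IsWalkTo M i S ℓ →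
    ∃ ℓ' ≤ ℓ, 1 ≤ ℓ' ∧ ∃ w : ℕ → V, w 0 = i ∧
      (∀ k < ℓ', M (w k) (w (k + 1)) ≠ 0 ∧ w k ≠ w (k + 1)) ∧ w ℓ' ∈ S := by
  intro ℓ
  induction ℓ using Nat.strong_induction_on with
  | _ ℓ ih =>
    rintro ⟨h1, w, hw0, hedge, hend⟩
    by_cases hs : ∀ k < ℓ, w k ≠ w (k + 1)
    · exact ⟨ℓ, le_rfl, h1, w, hw0, fun k hk => ⟨hedge k hk, hs k hk⟩, hend⟩
    · push_neg at hs
      obtain ⟨k, hk, hkk⟩ := hs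
      have hℓ2 : 2 ≤ ℓ := by
        by_contra h2
        have hℓ1 : ℓ = 1 := by omega
        have hk0 : k = 0 := by omega
        subst hℓ1; subst hk0
        exact hi (by rwa [← hkk, hw0] at hend)
      set w' : ℕ → V := fun m => if m < k then w m else w (m + 1) with hw'
      have hwalk : IsWalkTo M i S (ℓ - 1) := by
        refine ⟨by omega, w', ?_, ?_, ?_⟩
        · rcases Nat.eq_zero_or_pos k with h0 | h0
          · subst h0
            show (if (0:ℕ) < 0 then w 0 else w (0 + 1)) = i
            rw [if_neg (lt_irrefl 0), ← hkk, hw0]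
          · show (if (0:ℕ) < k then w 0 else w (0 + 1)) = i
            rw [if_pos h0, hw0]
        · intro m hm
          simp only [hw']
          rcases lt_trichotomy (m + 1) k with h | h | h
          · rw [if_pos (by omega), if_pos h]; exact hedge m (by omega)
          · rw [if_pos (by omega), if_neg (by omega)]
            have hh : w (m + 1 + 1) = w (m + 1) := by
              rw [show m + 1 = k from h]; exact hkk.symm
            rw [hh]; exact hedge m (by omega)
          · rw [if_neg (by omega), if_neg (by omega)]; exact hedge (m + 1) (by omega)
        · simp only [hw']
          rw [if_neg (by omega), show ℓ - 1 + 1 = ℓ by omega]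
          exact hend
      obtain ⟨ℓ', hle, rest⟩ := ih (ℓ - 1) (by omega) hwalk
      exact ⟨ℓ', by omega, rest⟩

lemma iInf_walk_eq {V : Type*} (M N : Matrix V V ℝ)
    (hMN : ∀ i j : V, i ≠ j → ((M i j ≠ 0) ↔ (N i j ≠ 0))) {i : V} {S : Set V}
    (hi : i ∉ S) :
    (⨅ ℓ ∈ {ℓ : ℕ | IsWalkTo M i S ℓ}, (ℓ : ℕ∞)) =
      ⨅ ℓ ∈ {ℓ : ℕ | IsWalkTo N i S ℓ}, (ℓ : ℕ∞) := by
  have key : ∀ (M N : Matrix V V ℝ), (∀ i j : V, i ≠ j → ((M i j ≠ 0) ↔ (N i j ≠ 0))) →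
      (⨅ ℓ ∈ {ℓ : ℕ | IsWalkTo N i S ℓ}, (ℓ : ℕ∞)) ≤
        ⨅ ℓ ∈ {ℓ : ℕ | IsWalkTo M i S ℓ}, (ℓ : ℕ∞) := by
    intro M N hMN
    refine le_iInf₂ fun ℓ hℓ => ?_
    obtain ⟨ℓ', hle, h1, w, hw0, hedge, hend⟩ := offdiag_walk M hi ℓ hℓ
    have hw : IsWalkTo N i S ℓ' :=
      ⟨h1, w, hw0, fun k hk => ((hMN _ _ (hedge k hk).2).mp (hedge k hk).1), hend⟩
    exact le_trans (iInf₂_le ℓ' hw) (by exact_mod_cast hle)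
  exact le_antisymm (key N M fun a b h => (hMN a b h).symm) (key M N hMN)

theorem stmt12 {n : ℕ} (A D : Matrix (Fin n) (Fin n) ℝ)
    (hZ : ∀ i j, i ≠ j → A i j ≤ 0) (hdiag : ∀ i, 0 ≤ A i i)
    (hwdd : IsWDD A)
    (hDoff : ∀ i j, i ≠ j → D i j = 0) (hDpos : ∀ i, 0 < D i i)
    (hDle : ∀ i, A i i ≠ 0 → D i i ≤ 1 / A i i) :
    IsSubstochastic (1 - D * A) ∧ conn A = conHat (1 - D * A) := by
  set B := 1 - D * A with hBdef
  have hB : ∀ i j, B i j = (if i = j then (1 : ℝ) else 0) - D i i * A i j := by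
    intro i j
    have hmul : (D * A) i j = D i i * A i j := by
      rw [Matrix.mul_apply]
      exact Finset.sum_eq_single i (fun k _ hne => by rw [hDoff i k (Ne.symm hne), zero_mul])
        (fun h => absurd (Finset.mem_univ i) h)
    rw [hBdef, Matrix.sub_apply, Matrix.one_apply, hmul]
  have hAbsOff : ∀ i j, i ≠ j → |A i j| = -A i j := fun i j h => abs_of_nonpos (hZ i j h)
  have hsum : ∀ i, 0 ≤ ∑ j, A i j := by
    intro i
    have h1 : ∑ j ∈ Finset.univ.erase i, |A i j| = -∑ j ∈ Finset.univ.erase i, A i j := by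
      rw [← Finset.sum_neg_distrib]
      exact Finset.sum_congr rfl fun j hj => hAbsOff i j (Ne.symm (Finset.ne_of_mem_erase hj))
    have h2 := hwdd i
    rw [h1, abs_of_nonneg (hdiag i)] at h2
    have h3 : ∑ j, A i j = A i i + ∑ j ∈ Finset.univ.erase i, A i j :=
      (Finset.add_sum_erase Finset.univ (A i) (Finset.mem_univ i)).symm
    linarith
  have hrow : ∀ i, ∑ j, B i j = 1 - D i i * ∑ j, A i j := by
    intro i
    simp only [hB]
    rw [Finset.sum_sub_distrib, ← Finset.mul_sum]
    congr 1
    simp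
  have hDAle : ∀ i, D i i * A i i ≤ 1 := by
    intro i
    by_cases h : A i i = 0
    · rw [h, mul_zero]; exact zero_le_one
    · have hpos : 0 < A i i := lt_of_le_of_ne (hdiag i) (Ne.symm h)
      have := hDle i h
      calc D i i * A i i ≤ (1 / A i i) * A i i := by
            exact mul_le_mul_of_nonneg_right this (le_of_lt hpos)
        _ = 1 := by field_simp
  have hsub : IsSubstochastic B := by
    constructor
    · intro i j
      rw [hB]
      by_cases h : i = j
      · subst h
        simp only [if_pos rfl, if_true]
        linarith [hDAle i]
      · rw [if_neg h]
        have := mul_nonneg (le_of_lt (hDpos i)) (neg_nonneg.mpr (hZ i j h))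
        nlinarith
    · intro i
      rw [hrow i]
      nlinarith [mul_nonneg (le_of_lt (hDpos i)) (hsum i)]
  have hJ : Jhat B = Jdom A := by
    ext i
    simp only [Jhat, Jdom, Set.mem_setOf_eq]
    rw [hrow i]
    have h1 : ∑ j ∈ Finset.univ.erase i, |A i j| = -∑ j ∈ Finset.univ.erase i, A i j := by
      rw [← Finset.sum_neg_distrib]
      exact Finset.sum_congr rfl fun j hj => hAbsOff i j (Ne.symm (Finset.ne_of_mem_erase hj))
    have h3 : ∑ j, A i j = A i i + ∑ j ∈ Finset.univ.erase i, A i j :=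
      (Finset.add_sum_erase Finset.univ (A i) (Finset.mem_univ i)).symm
    rw [h1, abs_of_nonneg (hdiag i)]
    constructor
    · intro h
      have : 0 < D i i * ∑ j, A i j := by linarith
      have hs : 0 < ∑ j, A i j := by
        by_contra hns; push_neg at hns
        nlinarith [hDpos i]
      linarith [h3]
    · intro h
      have hs : 0 < ∑ j, A i j := by rw [h3]; linarith
      nlinarith [hDpos i]
  have hOff : ∀ i j : Fin n, i ≠ j → ((A i j ≠ 0) ↔ (B i j ≠ 0)) := by
    intro i j h
    rw [hB, if_neg h]
    constructor
    · intro hA h0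
      have : D i i * A i j = 0 := by linarith
      exact hA ((mul_eq_zero.mp this).resolve_left (ne_of_gt (hDpos i)))
    · intro hB0 h0
      rw [h0, mul_zero] at hB0
      exact hB0 (by ring)
  refine ⟨hsub, ?_⟩
  rw [conn, conHat, hJ]
  exact iSup_congr fun i => iSup_congr fun hi => iInf_walk_eq A B hOff hi
end

section
/- Let B be an n×n substochastic matrix and D an n×n diagonal matrix with positive diagonal entries. Then A := D(I − B) is a weakly diagonally dominant L₀-matrix and con A = ĉon B. -/
open Matrix Filter Finset

lemma entryA {n : ℕ} (B D : Matrix (Fin n) (Fin n) ℝ)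
    (hDoff : ∀ i j, i ≠ j → D i j = 0) (i j : Fin n) :
    (D * (1 - B)) i j = D i i * ((if i = j then (1:ℝ) else 0) - B i j) := by
  rw [Matrix.mul_apply, Fintype.sum_eq_single i]
  · simp [Matrix.one_apply]
  · intro k hk
    rw [hDoff i k (Ne.symm hk)]; ring

lemma stuckrow {n : ℕ} {B : Matrix (Fin n) (Fin n) ℝ} (hB : IsSubstochastic B)
    {i : Fin n} (h1 : B i i = 1) : ∀ j, j ≠ i → B i j = 0 := by
  have hsum := hB.2 i
  rw [← Finset.add_sum_erase _ _ (Finset.mem_univ i), h1] at hsum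
  have hz : ∑ j ∈ Finset.univ.erase i, B i j = 0 :=
    le_antisymm (by linarith) (Finset.sum_nonneg fun j _ => hB.1 i j)
  intro j hj
  exact (Finset.sum_eq_zero_iff_of_nonneg (fun k _ => hB.1 i k)).mp hz j
    (Finset.mem_erase.mpr ⟨hj, Finset.mem_univ j⟩)

lemma stuckrow_notJhat {n : ℕ} {B : Matrix (Fin n) (Fin n) ℝ} (hB : IsSubstochastic B)
    {i : Fin n} (h1 : B i i = 1) : i ∉ Jhat B := by
  have : (1:ℝ) ≤ ∑ j, B i j := by
    rw [← h1]
    exact Finset.single_le_sum (fun k _ => hB.1 i k) (Finset.mem_univ i)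
  simp only [Jhat, Set.mem_setOf_eq, not_lt]
  linarith

theorem stmt13 {n : ℕ} (B D : Matrix (Fin n) (Fin n) ℝ)
    (hB : IsSubstochastic B)
    (hDoff : ∀ i j, i ≠ j → D i j = 0) (hDpos : ∀ i, 0 < D i i) :
    IsWDD (D * (1 - B)) ∧
      (∀ i j, i ≠ j → (D * (1 - B)) i j ≤ 0) ∧
      (∀ i, 0 ≤ (D * (1 - B)) i i) ∧
      conn (D * (1 - B)) = conHat B := by
  set A := D * (1 - B) with hAdef
  have hAoff : ∀ i j, i ≠ j → A i j = -(D i i * B i j) := by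
    intro i j hij
    have h := entryA B D hDoff i j
    rw [if_neg hij] at h
    rw [hAdef, h]; ring
  have hAdiag : ∀ i, A i i = D i i * (1 - B i i) := by
    intro i
    have h := entryA B D hDoff i i
    rw [if_pos rfl] at h
    rw [hAdef, h]
  have hBii_le : ∀ i, B i i ≤ 1 := fun i =>
    le_trans (Finset.single_le_sum (fun k _ => hB.1 i k) (Finset.mem_univ i)) (hB.2 i)
  have hdiag_nonneg : ∀ i, 0 ≤ A i i := fun i => by
    rw [hAdiag i]
    exact mul_nonneg (hDpos i).le (by linarith [hBii_le i])
  have habs_diag : ∀ i, |A i i| = D i i * (1 - B i i) := fun i => by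
    rw [abs_of_nonneg (hdiag_nonneg i), hAdiag i]
  have habs_off : ∀ i, ∑ j ∈ Finset.univ.erase i, |A i j| =
      D i i * ∑ j ∈ Finset.univ.erase i, B i j := by
    intro i
    rw [Finset.mul_sum]
    refine Finset.sum_congr rfl fun j hj => ?_
    have hij : i ≠ j := (Finset.mem_erase.mp hj).1.symm
    rw [hAoff i j hij, abs_neg, abs_of_nonneg (mul_nonneg (hDpos i).le (hB.1 i j))]
  have hrow : ∀ i, B i i + ∑ j ∈ Finset.univ.erase i, B i j = ∑ j, B i j := fun i =>
    Finset.add_sum_erase _ _ (Finset.mem_univ i)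
  -- WDD
  have hwdd : IsWDD A := by
    intro i
    rw [habs_diag i, habs_off i]
    exact mul_le_mul_of_nonneg_left (by linarith [hrow i, hB.2 i]) (hDpos i).le
  -- Jdom A = Jhat B
  have hJ : Jdom A = Jhat B := by
    ext i
    simp only [Jdom, Jhat, Set.mem_setOf_eq]
    rw [habs_diag i, habs_off i]
    constructor
    · intro h
      have h2 : ∑ j ∈ Finset.univ.erase i, B i j < 1 - B i i :=
        lt_of_mul_lt_mul_left h (hDpos i).le
      linarith [hrow i]
    · intro h
      exact (mul_lt_mul_iff_right₀ (hDpos i)).mpr (by linarith [hrow i])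
  -- edges
  have hedgeBA : ∀ i j : Fin n, B i j ≠ 0 → B i i ≠ 1 → A i j ≠ 0 := by
    intro i j hBij hBii
    rcases eq_or_ne i j with rfl | hij
    · rw [hAdiag i]
      refine mul_ne_zero (hDpos i).ne' ?_
      intro h
      exact hBii (by linarith [sub_eq_zero.mp h])
    · rw [hAoff i j hij]
      simpa using mul_ne_zero (hDpos i).ne' hBij
  have hedgeAB : ∀ i j : Fin n, i ≠ j → A i j ≠ 0 → B i j ≠ 0 := by
    intro i j hij hAij hB0
    apply hAij
    rw [hAoff i j hij, hB0]; ring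
  -- direction (a): B-walk to A-walk
  have hwalkBA : ∀ (i : Fin n) (ℓ : ℕ), IsWalkTo B i (Jhat B) ℓ → IsWalkTo A i (Jhat B) ℓ := by
    rintro i ℓ ⟨hℓ, w, hw0, hedge, hend⟩
    refine ⟨hℓ, w, hw0, ?_, hend⟩
    intro k hk
    refine hedgeBA _ _ (hedge k hk) ?_
    intro h1
    have hstay : ∀ d, k + d ≤ ℓ → w (k + d) = w k := by
      intro d
      induction d with
      | zero => intro _; rfl
      | succ m ih =>
        intro hle
        have hm : k + m < ℓ := by omega
        have hwm : w (k + m) = w k := ih (by omega)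
        have hed := hedge (k + m) hm
        rw [hwm] at hed
        have hnext : w (k + m + 1) = w k := by
          by_contra hne
          exact hed (stuckrow hB h1 _ hne)
        exact hnext
    have hwℓ : w ℓ = w k := by
      have h := hstay (ℓ - k) (by omega)
      rwa [Nat.add_sub_cancel' (by omega : k ≤ ℓ)] at h
    rw [hwℓ] at hend
    exact stuckrow_notJhat hB h1 hend
  -- direction (b): A-walk to B-walk of smaller or equal length
  have hwalkAB : ∀ (ℓ : ℕ) (i : Fin n), i ∉ Jhat B → IsWalkTo A i (Jhat B) ℓ →
      ∃ ℓ', ℓ' ≤ ℓ ∧ IsWalkTo B i (Jhat B) ℓ' := by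
    intro ℓ
    induction ℓ using Nat.strong_induction_on with
    | _ ℓ IH =>
      rintro i hi ⟨hℓ, w, hw0, hedge, hend⟩
      by_cases hk : ∃ k, k < ℓ ∧ w k = w (k + 1) ∧ B (w k) (w k) = 0
      · obtain ⟨k, hkℓ, hwk, hBk⟩ := hk
        have hℓ2 : 2 ≤ ℓ := by
          by_contra h
          have hℓ1 : ℓ = 1 := by omega
          subst hℓ1
          have hk0 : k = 0 := by omega
          subst hk0
          rw [← hwk, hw0] at hend
          exact hi hend
        have hwalk' : IsWalkTo A i (Jhat B) (ℓ - 1) := by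
          refine ⟨by omega, fun m => if m ≤ k then w m else w (m + 1), ?_, ?_, ?_⟩
          · show (if (0:ℕ) ≤ k then w 0 else w 1) = i
            rw [if_pos (Nat.zero_le k)]; exact hw0
          · intro m hm
            show A (if m ≤ k then w m else w (m + 1))
                (if m + 1 ≤ k then w (m + 1) else w (m + 2)) ≠ 0
            by_cases h1 : m + 1 ≤ k
            · rw [if_pos (by omega : m ≤ k), if_pos h1]
              exact hedge m (by omega)
            · by_cases h2 : m ≤ k
              · have hmk : m = k := by omega
                rw [if_pos h2, if_neg h1, hmk, hwk]
                exact hedge (k + 1) (by omega)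
              · rw [if_neg h2, if_neg (by omega : ¬ m + 1 ≤ k)]
                exact hedge (m + 1) (by omega)
          · show (if ℓ - 1 ≤ k then w (ℓ - 1) else w (ℓ - 1 + 1)) ∈ Jhat B
            by_cases h : ℓ - 1 ≤ k
            · rw [if_pos h]
              have hkl : k = ℓ - 1 := by omega
              have hkk : k + 1 = ℓ := by omega
              rw [← hkl, hwk, hkk]
              exact hend
            · rw [if_neg h, (by omega : ℓ - 1 + 1 = ℓ)]
              exact hend
        obtain ⟨ℓ', hle, hwB⟩ := IH (ℓ - 1) (by omega) i hi hwalk'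
        exact ⟨ℓ', by omega, hwB⟩
      · push_neg at hk
        refine ⟨ℓ, le_rfl, hℓ, w, hw0, ?_, hend⟩
        intro m hm
        rcases eq_or_ne (w m) (w (m + 1)) with he | hne
        · intro hB0
          rw [← he] at hB0
          exact hk m hm he hB0
        · exact hedgeAB _ _ hne (hedge m hm)
  -- combine for conn = conHat
  have hcon : conn A = conHat B := by
    unfold conn conHat
    rw [hJ]
    refine iSup_congr fun i => iSup_congr fun hi => le_antisymm ?_ ?_
    · refine le_iInf₂ fun ℓ hℓ => ?_
      exact iInf₂_le_of_le ℓ (hwalkBA i ℓ hℓ) le_rfl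
    · refine le_iInf₂ fun ℓ hℓ => ?_
      obtain ⟨ℓ', hle, hwB⟩ := hwalkAB ℓ i hi hℓ
      exact iInf₂_le_of_le ℓ' hwB (by exact_mod_cast hle)
  refine ⟨hwdd, fun i j hij => ?_, hdiag_nonneg, hcon⟩
  rw [hAoff i j hij]
  simpa using mul_nonneg (hDpos i).le (hB.1 i j)
end

section
/- Every nonsingular weakly diagonally dominant L-matrix is weakly chained diagonally dominant. -/
open Matrix Filter Finset

lemma det_zero_of_no_walk {n : ℕ} (A : Matrix (Fin n) (Fin n) ℝ)
    (hZ : ∀ i j, i ≠ j → A i j ≤ 0) (hdiag : ∀ i, 0 < A i i)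
    (hwdd : IsWDD A) (i : Fin n) (hi : i ∉ Jdom A)
    (hno : ¬ ∃ ℓ, IsWalkTo A i (Jdom A) ℓ) : A.det = 0 := by
  classical
  -- S : reachable set from i (including i)
  set S : Set (Fin n) := {j | j = i ∨ ∃ ℓ, 1 ≤ ℓ ∧ ∃ w : ℕ → Fin n,
    w 0 = i ∧ (∀ k < ℓ, A (w k) (w (k + 1)) ≠ 0) ∧ w ℓ = j} with hS
  have hiS : i ∈ S := Or.inl rfl
  -- closure under edges
  have hclose : ∀ j ∈ S, ∀ k, A j k ≠ 0 → k ∈ S := by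
    rintro j (rfl | ⟨ℓ, hℓ, w, hw0, hwe, hwend⟩) k hAk
    · exact Or.inr ⟨1, le_refl 1, fun m => if m = 0 then j else k, by simp,
        by intro m hm; interval_cases m; simpa, by simp⟩
    · refine Or.inr ⟨ℓ + 1, by omega, fun m => if m = ℓ + 1 then k else w m, ?_, ?_, by simp⟩
      · beta_reduce; rw [if_neg (by omega : ¬ (0 = ℓ + 1))]; exact hw0
      · intro m hm
        rcases Nat.lt_succ_iff_lt_or_eq.mp hm with hm' | rfl
        · beta_reduce
          rw [if_neg (by omega : ¬ (m = ℓ + 1)), if_neg (by omega : ¬ (m + 1 = ℓ + 1))]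
          exact hwe m hm'
        · beta_reduce
          rw [if_neg (by omega : ¬ (m = m + 1)), if_pos rfl, hwend]; exact hAk
  -- every j ∈ S is not in Jdom
  have hnotJ : ∀ j ∈ S, j ∉ Jdom A := by
    rintro j (rfl | ⟨ℓ, hℓ, w, hw0, hwe, hwend⟩) hj
    · exact hi hj
    · exact hno ⟨ℓ, hℓ, w, hw0, hwe, hwend ▸ hj⟩
  -- row sums over S vanish for j ∈ S
  have hrow : ∀ j ∈ S, ∑ k ∈ S.toFinset, A j k = 0 := by
    intro j hjS
    have hzero : ∀ k ∉ S, A j k = 0 := by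
      intro k hk
      by_contra h
      exact hk (hclose j hjS k h)
    have heq : ∑ k ∈ Finset.univ.erase j, |A j k| = |A j j| :=
      le_antisymm (hwdd j) (not_lt.mp (hnotJ j hjS))
    have habs : ∀ k, k ≠ j → A j k = -|A j k| := by
      intro k hk
      rw [abs_of_nonpos (hZ j k (Ne.symm hk))]; ring
    have hsum : ∑ k, A j k = 0 := by
      rw [← Finset.add_sum_erase _ _ (Finset.mem_univ j)]
      rw [Finset.sum_congr rfl (fun k hk => habs k (Finset.ne_of_mem_erase hk))]
      rw [Finset.sum_neg_distrib, heq, abs_of_pos (hdiag j)]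
      ring
    rw [Finset.sum_subset (Finset.subset_univ _)
      (fun x _ hx => hzero x (by simpa using hx))]
    exact hsum
  -- block triangular structure
  have hblock : A.det = (A.toSquareBlockProp (· ∈ S)).det
      * (A.toSquareBlockProp fun j => ¬ (j ∈ S)).det :=
    Matrix.twoBlockTriangular_det' A (· ∈ S) (fun a ha b hb => by
      by_contra h; exact hb (hclose a ha b h))
  -- the S-block is singular: row sums are zero
  have hSdet : (A.toSquareBlockProp (· ∈ S)).det = 0 := by
    rw [← Matrix.exists_mulVec_eq_zero_iff]
    refine ⟨fun _ => (1 : ℝ), ?_, ?_⟩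
    · intro h
      have := congrFun h ⟨i, hiS⟩
      norm_num at this
    · funext a
      show ∑ b : {j // j ∈ S}, A.toSquareBlockProp (· ∈ S) a b * 1 = 0
      have h1 : ∀ b : {j // j ∈ S}, A.toSquareBlockProp (· ∈ S) a b * 1 = A (↑a) (↑b) :=
        fun b => mul_one _
      rw [Finset.sum_congr rfl (fun b _ => h1 b)]
      rw [show (∑ b : {j // j ∈ S}, A (↑a) (↑b)) = ∑ k ∈ S.toFinset, A (↑a) k from
        Finset.sum_set_coe (s := S) (f := fun k => A (↑a) k)]
      exact hrow a a.2
  rw [hblock, hSdet, zero_mul]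

theorem stmt14 {n : ℕ} (hn : 0 < n) (A : Matrix (Fin n) (Fin n) ℝ)
    (hZ : ∀ i j, i ≠ j → A i j ≤ 0) (hdiag : ∀ i, 0 < A i i)
    (hwdd : IsWDD A) (hns : A.det ≠ 0) :
    IsWCDD A := by
  classical
  refine ⟨hwdd, ?_, ?_⟩
  · by_contra h
    rw [Set.not_nonempty_iff_eq_empty] at h
    apply hns
    refine det_zero_of_no_walk A hZ hdiag hwdd ⟨0, hn⟩ (by simp [h]) ?_
    rintro ⟨ℓ, _, _, _, _, hmem⟩
    rw [h] at hmem
    exact hmem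
  · intro i hi
    by_contra hcon
    exact hns (det_zero_of_no_walk A hZ hdiag hwdd i hi hcon)
end

section
/- Every weakly chained diagonally dominant L-matrix A is a nonsingular M-matrix; in particular A is invertible and every entry of A⁻¹ is nonnegative. -/
open Matrix Filter Finset

/-- The spectral radius of a square real matrix: the supremum of the absolute values of
its complex eigenvalues. -/
noncomputable def specRad {n : ℕ} (C : Matrix (Fin n) (Fin n) ℝ) : ℝ :=
  sSup {x : ℝ | ∃ μ ∈ spectrum ℂ (C.map Complex.ofReal), x = ‖μ‖}

lemma key_mono {n : ℕ} (A : Matrix (Fin n) (Fin n) ℝ)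
    (hZ : ∀ i j, i ≠ j → A i j ≤ 0) (hdiag : ∀ i, 0 < A i i)
    (hwcdd : IsWCDD A) (x : Fin n → ℝ) (hx : ∀ i, 0 ≤ A.mulVec x i) :
    ∀ i, 0 ≤ x i := by
  by_contra hcon
  push_neg at hcon
  obtain ⟨i₁, hi₁⟩ := hcon
  have hne : (Finset.univ : Finset (Fin n)).Nonempty := ⟨i₁, mem_univ _⟩
  obtain ⟨i₀, -, hmin⟩ := Finset.exists_min_image univ x hne
  set m := x i₀ with hm
  have hmlt : m < 0 := lt_of_le_of_lt (hmin i₁ (mem_univ _)) hi₁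
  have hminle : ∀ j, m ≤ x j := fun j => hmin j (mem_univ _)
  have claim : ∀ i, x i = m → i ∉ Jdom A ∧ ∀ j, A i j ≠ 0 → x j = m := by
    intro i hxi
    have hrow : 0 ≤ ∑ j, A i j * x j := by
      have := hx i
      rwa [mulVec, dotProduct] at this
    have hsplit : ∑ j, A i j * x j
        = A i i * x i + ∑ j ∈ univ.erase i, A i j * x j := by
      rw [← Finset.add_sum_erase univ _ (mem_univ i)]
    have habs : ∀ j ∈ univ.erase i, |A i j| = -A i j := by
      intro j hj
      exact abs_of_nonpos (hZ i j (Finset.ne_of_mem_erase hj).symm)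
    have hwdd := hwcdd.1 i
    rw [Finset.sum_congr rfl habs, abs_of_pos (hdiag i)] at hwdd
    -- hwdd : ∑ j in erase, -A i j ≤ A i i
    have hterm : ∀ j ∈ univ.erase i, A i j * x j ≤ A i j * m := by
      intro j hj
      exact mul_le_mul_of_nonpos_left (hminle j) (hZ i j (Finset.ne_of_mem_erase hj).symm)
    have hsum_le : ∑ j ∈ univ.erase i, A i j * x j ≤ (∑ j ∈ univ.erase i, A i j) * m := by
      rw [Finset.sum_mul]
      exact Finset.sum_le_sum hterm
    have hkey : 0 ≤ (A i i + ∑ j ∈ univ.erase i, A i j) * m := by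
      have : A i i * x i = A i i * m := by rw [hxi]
      nlinarith [hrow, hsplit, hsum_le]
    have hfac : A i i + ∑ j ∈ univ.erase i, A i j ≤ 0 := by
      nlinarith [hkey, hmlt]
    have hfac' : 0 ≤ A i i + ∑ j ∈ univ.erase i, A i j := by
      have : ∑ j ∈ univ.erase i, -A i j ≤ A i i := hwdd
      have h2 : ∑ j ∈ univ.erase i, -A i j = -∑ j ∈ univ.erase i, A i j := by
        rw [Finset.sum_neg_distrib]
      linarith [this, h2.symm ▸ this]
    constructor
    · intro hJ
      rw [Jdom, Set.mem_setOf_eq, Finset.sum_congr rfl habs, abs_of_pos (hdiag i)] at hJ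
      rw [Finset.sum_neg_distrib] at hJ
      linarith
    · intro j hAij
      rcases eq_or_ne j i with rfl | hji
      · exact hxi
      · by_contra hxj
        have hxjgt : m < x j := lt_of_le_of_ne (hminle j) (Ne.symm hxj)
        have hAijneg : A i j < 0 := lt_of_le_of_ne (hZ i j (Ne.symm hji)) hAij
        have hstrict : A i j * x j < A i j * m := by
          exact mul_lt_mul_of_neg_left hxjgt hAijneg
        have hjmem : j ∈ univ.erase i := Finset.mem_erase.mpr ⟨hji, mem_univ _⟩
        have hsum_lt : ∑ k ∈ univ.erase i, A i k * x k < (∑ k ∈ univ.erase i, A i k) * m := by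
          rw [Finset.sum_mul]
          exact Finset.sum_lt_sum hterm ⟨j, hjmem, hstrict⟩
        have heq0 : A i i + ∑ k ∈ univ.erase i, A i k = 0 := le_antisymm hfac hfac'
        have h5 : A i i * x i = A i i * m := by rw [hxi]
        have h6 : (∑ k ∈ univ.erase i, A i k) * m = -(A i i) * m := by
          rw [show (∑ k ∈ univ.erase i, A i k) = -(A i i) from by linarith]
        linarith [hrow, hsplit, hsum_lt]
  obtain ⟨ℓ, hℓ1, w, hw0, hedge, hend⟩ := hwcdd.2.2 i₀ (claim i₀ rfl).1
  have hwk : ∀ k ≤ ℓ, x (w k) = m := by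
    intro k
    induction k with
    | zero => intro _; rw [hw0]
    | succ k ih =>
      intro hk
      have hk' : k < ℓ := Nat.lt_of_succ_le hk
      exact (claim (w k) (ih (le_of_lt hk'))).2 (w (k+1)) (hedge k hk')
  exact (claim (w ℓ) (hwk ℓ le_rfl)).1 hend

lemma gersh {n : ℕ} (C : Matrix (Fin n) (Fin n) ℝ) (s : ℝ)
    (h : ∀ i, ∑ j, |C i j| ≤ s) {μ : ℂ}
    (hμ : μ ∈ spectrum ℂ (C.map Complex.ofReal)) : ‖μ‖ ≤ s := by
  set M := C.map Complex.ofReal with hM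
  rw [spectrum.mem_iff] at hμ
  have hdet : (algebraMap ℂ (Matrix (Fin n) (Fin n) ℂ) μ - M).det = 0 := by
    by_contra hd
    exact hμ ((Matrix.isUnit_iff_isUnit_det _).mpr (isUnit_iff_ne_zero.mpr hd))
  obtain ⟨v, hvz, hv0⟩ := Matrix.exists_mulVec_eq_zero_iff.mpr hdet
  have hMv : ∀ i, M.mulVec v i = μ * v i := by
    intro i
    have h1 := congrFun hv0 i
    rw [sub_mulVec] at h1
    have h2 : (algebraMap ℂ (Matrix (Fin n) (Fin n) ℂ) μ).mulVec v i = μ * v i := by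
      rw [Matrix.algebraMap_eq_diagonal, mulVec_diagonal]
      simp [Pi.algebraMap_apply]
    have := sub_eq_zero.mp h1
    rw [h2] at this
    exact this.symm
  obtain ⟨j₀, hj₀⟩ := Function.ne_iff.mp hvz
  obtain ⟨i, -, hmax⟩ := Finset.exists_max_image univ (fun k => ‖v k‖) ⟨j₀, mem_univ _⟩
  have hvi : 0 < ‖v i‖ := lt_of_lt_of_le (norm_pos_iff.mpr hj₀) (hmax j₀ (mem_univ _))
  have h2 : (M.mulVec v) i = ∑ j, M i j * v j := by rw [mulVec, dotProduct]
  have hle : ‖μ‖ * ‖v i‖ ≤ s * ‖v i‖ := by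
    calc ‖μ‖ * ‖v i‖ = ‖M.mulVec v i‖ := by rw [hMv i, norm_mul]
    _ = ‖∑ j, M i j * v j‖ := by rw [h2]
    _ ≤ ∑ j, ‖M i j * v j‖ := norm_sum_le _ _
    _ ≤ ∑ j, |C i j| * ‖v i‖ := Finset.sum_le_sum (fun j _ => by
         rw [norm_mul]
         have hn : ‖M i j‖ = |C i j| := by
           simp [hM, Matrix.map_apply, Real.norm_eq_abs]
         rw [hn]
         exact mul_le_mul_of_nonneg_left (hmax j (mem_univ _)) (abs_nonneg _))
    _ = (∑ j, |C i j|) * ‖v i‖ := by rw [Finset.sum_mul]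
    _ ≤ s * ‖v i‖ := mul_le_mul_of_nonneg_right (h i) (norm_nonneg _)
  exact le_of_mul_le_mul_right hle hvi

theorem stmt15 {n : ℕ} (A : Matrix (Fin n) (Fin n) ℝ)
    (hZ : ∀ i j, i ≠ j → A i j ≤ 0) (hdiag : ∀ i, 0 < A i i)
    (hwcdd : IsWCDD A) :
    (∃ (s : ℝ) (C : Matrix (Fin n) (Fin n) ℝ), (∀ i j, 0 ≤ C i j) ∧
        specRad C ≤ s ∧ A = s • (1 : Matrix (Fin n) (Fin n) ℝ) - C) ∧
      A.det ≠ 0 ∧ ∀ i j, 0 ≤ A⁻¹ i j := by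
  have hdet : A.det ≠ 0 := by
    intro hd
    obtain ⟨v, hvne, hv0⟩ := Matrix.exists_mulVec_eq_zero_iff.mpr hd
    have h1 : ∀ i, 0 ≤ v i := by
      refine key_mono A hZ hdiag hwcdd v (fun i => ?_)
      rw [hv0]; exact le_refl 0
    have h2 : ∀ i, 0 ≤ -v i := by
      refine key_mono A hZ hdiag hwcdd (-v) (fun i => ?_)
      rw [Matrix.mulVec_neg, hv0]
      simp
    exact hvne (funext fun i => show v i = 0 from le_antisymm (by linarith [h2 i]) (h1 i))
  refine ⟨?_, hdet, ?_⟩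
  · set s : ℝ := ∑ i, A i i with hs
    set C : Matrix (Fin n) (Fin n) ℝ := s • (1 : Matrix (Fin n) (Fin n) ℝ) - A with hC
    have hCentry : ∀ i j, C i j = (if i = j then s else 0) - A i j := by
      intro i j
      simp [hC, Matrix.sub_apply, Matrix.smul_apply, Matrix.one_apply, mul_ite]
    have hdiagsum : ∀ i : Fin n, s - A i i = ∑ k ∈ univ.erase i, A k k := by
      intro i
      rw [hs, ← Finset.add_sum_erase univ (fun k => A k k) (mem_univ i)]
      ring
    have hCnn : ∀ i j, 0 ≤ C i j := by
      intro i j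
      rw [hCentry]
      rcases eq_or_ne i j with rfl | hij
      · rw [if_pos rfl, hdiagsum]
        exact Finset.sum_nonneg fun k _ => le_of_lt (hdiag k)
      · rw [if_neg hij]
        have := hZ i j hij
        linarith
    have hrowsum : ∀ i, ∑ j, |C i j| ≤ s := by
      intro i
      rw [← Finset.add_sum_erase univ (fun j => |C i j|) (mem_univ i)]
      have hCii : |C i i| = s - A i i := by
        rw [abs_of_nonneg (hCnn i i), hCentry, if_pos rfl]
      have hCij : ∀ j ∈ univ.erase i, |C i j| = |A i j| := by
        intro j hj
        have hij : i ≠ j := (Finset.ne_of_mem_erase hj).symm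
        rw [hCentry, if_neg hij, zero_sub, abs_neg]
      rw [hCii, Finset.sum_congr rfl hCij]
      have hwdd := hwcdd.1 i
      rw [abs_of_pos (hdiag i)] at hwdd
      linarith
    have hs0 : 0 ≤ s := Finset.sum_nonneg fun k _ => le_of_lt (hdiag k)
    refine ⟨s, C, hCnn, ?_, by rw [hC, sub_sub_cancel]⟩
    refine Real.sSup_le ?_ hs0
    rintro x ⟨μ, hμ, rfl⟩
    exact gersh C s hrowsum hμ
  · intro i j
    have hu : IsUnit A.det := isUnit_iff_ne_zero.mpr hdet
    set x : Fin n → ℝ := A⁻¹.mulVec (Pi.single j 1) with hx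
    have hAx : A.mulVec x = Pi.single j 1 := by
      rw [hx, Matrix.mulVec_mulVec, Matrix.mul_nonsing_inv A hu, Matrix.one_mulVec]
    have h1 : ∀ i, 0 ≤ x i := by
      refine key_mono A hZ hdiag hwcdd x (fun k => ?_)
      rw [hAx]
      rcases eq_or_ne k j with rfl | hkj
      · simp
      · simp [Pi.single_apply, hkj]
    have hxi : x i = A⁻¹ i j := by
      simp [hx, mulVec, dotProduct, Pi.single_apply, mul_ite]
    rw [← hxi]; exact h1 i
end

section
/- Every nonsingular weakly diagonally dominant M-matrix is a weakly chained diagonally dominant L-matrix. That is, if A is weakly diagonally dominant, A = sI − C for some entrywise nonnegative matrix C and real s ≥ ρ(C), and A is invertible, then A is a w.c.d.d. L-matrix. -/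
open Matrix Filter Finset

/-!
A nonnegative matrix has `C i i ^ k ≤ (C ^ k) i i ≤ trace (C ^ k) ≤ n * ρ(C) ^ k` for every `k ≥ 1`,
so its diagonal is bounded by `ρ(C) ≤ s`; hence `A = s • 1 - C` is a Z-matrix with nonnegative
diagonal, and a zero diagonal entry would force, by weak dominance, a zero row.
If a row `i ∉ J(A)` had no walk into `J(A)`, the set `R` of vertices reachable from `i` would avoid
`J(A)`, so every row in `R` sums to zero and vanishes off `R`. Then `A` is block triangular with
diagonal block `A[R, R]` annihilating the all-ones vector, and `A` is singular.
-/

open Relation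

section Walks

variable {V : Type*} (A : Matrix V V ℝ)

theorem isWalkTo_singleton_one {i j : V} (h : A i j ≠ 0) : IsWalkTo A i {j} 1 := by
  refine ⟨le_rfl, fun m => if m = 0 then i else j, rfl, fun k hk => ?_, rfl⟩
  simpa [Nat.lt_one_iff.1 hk] using h

theorem IsWalkTo.snoc {i j k : V} {ℓ : ℕ} (hw : IsWalkTo A i {j} ℓ) (h : A j k ≠ 0) :
    IsWalkTo A i {k} (ℓ + 1) := by
  obtain ⟨-, w, hw0, hedge, hwℓ⟩ := hw
  refine ⟨by omega, Function.update w (ℓ + 1) k, ?_, fun m hm => ?_, by simp⟩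
  · simpa [Function.update_of_ne (Nat.succ_ne_zero ℓ).symm] using hw0
  · rcases Nat.lt_succ_iff_lt_or_eq.1 hm with hm | rfl
    · simpa [Function.update_of_ne (by omega : m ≠ ℓ + 1),
        Function.update_of_ne (by omega : m + 1 ≠ ℓ + 1)] using hedge m hm
    · simpa [Function.update_of_ne (by omega : m ≠ m + 1), Set.mem_singleton_iff.1 hwℓ] using h

theorem exists_isWalkTo_of_transGen {i j : V} (h : TransGen (fun a b => A a b ≠ 0) i j) :
    ∃ ℓ, IsWalkTo A i {j} ℓ := by
  induction h with
  | single h => exact ⟨1, isWalkTo_singleton_one A h⟩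
  | tail _ h ih => obtain ⟨ℓ, hw⟩ := ih; exact ⟨ℓ + 1, hw.snoc A h⟩

end Walks

theorem Matrix.det_eq_zero_of_closed_of_sum_eq_zero {ι R : Type*} [Fintype ι] [DecidableEq ι]
    [CommRing R] [IsDomain R] (A : Matrix ι ι R) {S : Set ι} (hS : S.Nonempty)
    (hclosed : ∀ j ∈ S, ∀ k, A j k ≠ 0 → k ∈ S) (hsum : ∀ j ∈ S, ∑ k, A j k = 0) :
    A.det = 0 := by
  classical
  rw [A.twoBlockTriangular_det' (· ∈ S) fun j hj k hk => by_contra fun h => hk (hclosed j hj k h)]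
  refine mul_eq_zero_of_left ?_ _
  obtain ⟨i, hi⟩ := hS
  refine exists_mulVec_eq_zero_iff.1 ⟨1, fun h => one_ne_zero (congrFun h ⟨i, hi⟩), ?_⟩
  funext j
  simp only [mulVec, dotProduct, toSquareBlockProp, toBlock_apply, Pi.one_apply, mul_one,
    Pi.zero_apply]
  calc ∑ k : S, A j k = ∑ k ∈ univ.filter (· ∈ S), A j k :=
        (sum_subtype _ (fun _ => by simp) (A j)).symm
    _ = ∑ k, A j k := sum_filter_of_ne fun k _ => hclosed j j.2 k
    _ = 0 := hsum j j.2

section DiagonalDominance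

variable {ι : Type*} [Fintype ι] [DecidableEq ι] {A : Matrix ι ι ℝ}

theorem IsWDD.apply_eq_zero_of_diag_eq_zero (hwdd : IsWDD A) {i : ι} (hi : A i i = 0) (j : ι) :
    A i j = 0 := by
  rcases eq_or_ne j i with rfl | hji
  · exact hi
  have hsum : ∑ k ∈ univ.erase i, |A i k| = 0 :=
    le_antisymm (by simpa [hi] using hwdd i) (sum_nonneg fun _ _ => abs_nonneg _)
  exact abs_eq_zero.1 <|
    (sum_eq_zero_iff_of_nonneg fun _ _ => abs_nonneg _).1 hsum j (mem_erase.2 ⟨hji, mem_univ j⟩)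

theorem IsWDD.sum_eq_zero_of_notMem_Jdom (hwdd : IsWDD A) {i : ι} (hdiag : 0 ≤ A i i)
    (hoff : ∀ j, i ≠ j → A i j ≤ 0) (hi : i ∉ Jdom A) : ∑ j, A i j = 0 := by
  have hdom : ∑ j ∈ univ.erase i, |A i j| = A i i := by
    rw [← abs_of_nonneg hdiag]
    exact le_antisymm (hwdd i) (not_lt.1 hi)
  have hoffsum : ∑ j ∈ univ.erase i, A i j = -A i i := by
    rw [← hdom, ← sum_neg_distrib]
    exact sum_congr rfl fun j hj => by
      rw [abs_of_nonpos (hoff j (ne_of_mem_erase hj).symm), neg_neg]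
  rw [← add_sum_erase _ _ (mem_univ i), hoffsum, add_neg_cancel]

theorem IsWDD.det_eq_zero_of_not_exists_isWalkTo (hwdd : IsWDD A) (hdiag : ∀ i, 0 ≤ A i i)
    (hoff : ∀ i j, i ≠ j → A i j ≤ 0) {i : ι} (hi : i ∉ Jdom A)
    (hno : ¬ ∃ ℓ, IsWalkTo A i (Jdom A) ℓ) : A.det = 0 := by
  set R := {j | ReflTransGen (fun a b => A a b ≠ 0) i j}
  have hRJ : ∀ j ∈ R, j ∉ Jdom A := by
    intro j hj hjJ
    rcases reflTransGen_iff_eq_or_transGen.1 hj with rfl | hj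
    · exact hi hjJ
    · obtain ⟨ℓ, hℓ, w, hw0, hedge, hwℓ⟩ := exists_isWalkTo_of_transGen A hj
      exact hno ⟨ℓ, hℓ, w, hw0, hedge, Set.mem_singleton_iff.1 hwℓ ▸ hjJ⟩
  exact A.det_eq_zero_of_closed_of_sum_eq_zero ⟨i, ReflTransGen.refl⟩
    (fun j hj k hk => ReflTransGen.tail hj hk)
    (fun j hj => hwdd.sum_eq_zero_of_notMem_Jdom (hdiag j) (hoff j) (hRJ j hj))

end DiagonalDominance

theorem Matrix.apply_self_pow_le_pow_apply_self {ι α : Type*} [Fintype ι] [DecidableEq ι]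
    [Semiring α] [PartialOrder α] [IsOrderedRing α] {C : Matrix ι ι α} (hC : ∀ i j, 0 ≤ C i j)
    (i : ι) (k : ℕ) : C i i ^ k ≤ (C ^ k) i i := by
  induction k with
  | zero => simp
  | succ k ih =>
    rw [pow_succ, pow_succ, mul_apply]
    calc C i i ^ k * C i i ≤ (C ^ k) i i * C i i := mul_le_mul_of_nonneg_right ih (hC i i)
      _ ≤ ∑ j, (C ^ k) i j * C j i :=
        single_le_sum (f := fun j => (C ^ k) i j * C j i)
          (fun j _ => mul_nonneg (pow_apply_nonneg hC k i j) (hC j i)) (mem_univ i)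

theorem le_of_forall_pow_le_mul_pow {a s c : ℝ} (hs : 0 ≤ s)
    (h : ∀ k, 0 < k → a ^ k ≤ c * s ^ k) : a ≤ s := by
  by_contra! hsa
  have ha : 0 < a := hs.trans_lt hsa
  have hlim : Tendsto (fun k => c * (s / a) ^ k) atTop (nhds 0) := by
    simpa using (tendsto_pow_atTop_nhds_zero_of_lt_one (div_nonneg hs ha.le)
      ((div_lt_one ha).2 hsa)).const_mul c
  obtain ⟨k, hk, hlt⟩ := ((eventually_gt_atTop 0).and (hlim.eventually_lt_const one_pos)).exists
  have hak : 0 < a ^ k := pow_pos ha k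
  rw [div_pow, ← mul_div_assoc, div_lt_one hak] at hlt
  exact (h k hk).not_gt hlt

section SpectralRadius

theorem Matrix.norm_trace_le_card_mul {ι : Type*} [Fintype ι] [DecidableEq ι] (M : Matrix ι ι ℂ)
    {r : ℝ} (h : ∀ μ ∈ spectrum ℂ M, ‖μ‖ ≤ r) : ‖M.trace‖ ≤ Fintype.card ι * r := by
  have hroots : ∀ x ∈ M.charpoly.roots.map (‖·‖), x ≤ r := by
    simp only [Multiset.mem_map, forall_exists_index, and_imp, forall_apply_eq_imp_iff₂]
    exact fun μ hμ => h μ (mem_spectrum_iff_isRoot_charpoly.2 (Polynomial.isRoot_of_mem_roots hμ))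
  calc ‖M.trace‖ = ‖M.charpoly.roots.sum‖ := by rw [trace_eq_sum_roots_charpoly]
    _ ≤ (M.charpoly.roots.map (‖·‖)).sum := norm_multiset_sum_le _
    _ ≤ (M.charpoly.roots.map (‖·‖)).card • r := Multiset.sum_le_card_nsmul _ _ hroots
    _ = Fintype.card ι * r := by
      rw [Multiset.card_map, IsAlgClosed.card_roots_eq_natDegree, charpoly_natDegree_eq_dim,
        nsmul_eq_mul]

variable {n : ℕ} (C : Matrix (Fin n) (Fin n) ℝ)

theorem specRad_nonneg : 0 ≤ specRad C :=
  Real.sSup_nonneg <| by rintro _ ⟨μ, -, rfl⟩; exact norm_nonneg μ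

theorem norm_le_specRad {μ : ℂ} (hμ : μ ∈ spectrum ℂ (C.map Complex.ofReal)) : ‖μ‖ ≤ specRad C := by
  refine le_csSup ?_ ⟨μ, hμ, rfl⟩
  refine ((finite_spectrum (C.map Complex.ofReal)).image (‖·‖)).bddAbove.mono ?_
  rintro _ ⟨ν, hν, rfl⟩
  exact ⟨ν, hν, rfl⟩

theorem abs_trace_pow_le_specRad {k : ℕ} (hk : 0 < k) :
    |(C ^ k).trace| ≤ n * specRad C ^ k := by
  have hmap : (C ^ k).map Complex.ofReal = C.map Complex.ofReal ^ k :=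
    Matrix.map_pow C Complex.ofRealHom k
  have htrace : ((C ^ k).map Complex.ofReal).trace = ((C ^ k).trace : ℂ) :=
    (AddMonoidHom.map_trace Complex.ofRealHom _).symm
  have hnorm := (C.map Complex.ofReal ^ k).norm_trace_le_card_mul (r := specRad C ^ k) <| by
    rw [spectrum.map_pow_of_pos _ hk]
    rintro _ ⟨μ, hμ, rfl⟩
    rw [norm_pow]
    exact pow_le_pow_left₀ (norm_nonneg μ) (norm_le_specRad C hμ) k
  rwa [← hmap, htrace, Fintype.card_fin, Complex.norm_real, Real.norm_eq_abs] at hnorm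

theorem apply_self_le_specRad (hC : ∀ i j, 0 ≤ C i j) (i : Fin n) : C i i ≤ specRad C := by
  refine le_of_forall_pow_le_mul_pow (c := n) (specRad_nonneg C) fun k hk => ?_
  calc C i i ^ k ≤ (C ^ k) i i := apply_self_pow_le_pow_apply_self hC i k
    _ ≤ (C ^ k).trace := single_le_sum (f := fun j => (C ^ k) j j)
        (fun j _ => pow_apply_nonneg hC k j j) (mem_univ i)
    _ ≤ |(C ^ k).trace| := le_abs_self _
    _ ≤ n * specRad C ^ k := abs_trace_pow_le_specRad C hk

end SpectralRadius

theorem stmt16 {n : ℕ} (hn : 0 < n) (A C : Matrix (Fin n) (Fin n) ℝ) (s : ℝ)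
    (hwdd : IsWDD A)
    (hC : ∀ i j, 0 ≤ C i j)
    (hs : specRad C ≤ s)
    (hA : A = s • (1 : Matrix (Fin n) (Fin n) ℝ) - C)
    (hns : A.det ≠ 0) :
    (∀ i j, i ≠ j → A i j ≤ 0) ∧ (∀ i, 0 < A i i) ∧ IsWCDD A := by
  have hoff : ∀ i j, i ≠ j → A i j ≤ 0 := fun i j hij => by
    simp [hA, one_apply_ne hij, hC i j]
  have hdiag : ∀ i, 0 < A i i := fun i => by
    have hAii : A i i = s - C i i := by simp [hA]
    refine (hAii ▸ sub_nonneg.2 ((apply_self_le_specRad C hC i).trans hs)).lt_of_ne' fun h => ?_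
    exact hns (det_eq_zero_of_row_eq_zero i (hwdd.apply_eq_zero_of_diag_eq_zero h))
  have hwalk : ∀ i ∉ Jdom A, ∃ ℓ, IsWalkTo A i (Jdom A) ℓ := fun i hi =>
    by_contra fun hno => hns <|
      hwdd.det_eq_zero_of_not_exists_isWalkTo (fun j => (hdiag j).le) hoff hi hno
  refine ⟨hoff, hdiag, hwdd, ?_, hwalk⟩
  by_contra hJ
  obtain ⟨ℓ, -, w, -, -, hmem⟩ := hwalk ⟨0, hn⟩ fun h => hJ ⟨_, h⟩
  exact hJ ⟨_, hmem⟩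
end

section
/- Let (B_n)_{n≥1} be a sequence of compatible substochastic matrices (B_k has size m_k × m_{k+1}), let C_0 := I and C_n := B_1 B_2 ⋯ B_n for n ≥ 1, and let α := ĉon(B_1, B_2, …). If α is finite, then ‖C_k‖_∞ = 1 for 0 ≤ k ≤ α, ‖C_{α+1}‖_∞ < 1, and ‖C_{k+1}‖_∞ ≤ ‖C_k‖_∞ for all k ≥ 0. If α is infinite, then ‖C_k‖_∞ = 1 for every k ≥ 1. -/
open Matrix Filter Finset

/-- Partial products `C_0 = I`, `C_k = B_1 B_2 ⋯ B_k` of a sequence of compatible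
matrices (here `B (k-1)` plays the role of `B_k`, of size `msz (k-1) × msz k`). -/
noncomputable def seqProd (msz : ℕ → ℕ)
    (B : ∀ k : ℕ, Matrix (Fin (msz k)) (Fin (msz (k + 1))) ℝ) :
    ∀ k : ℕ, Matrix (Fin (msz 0)) (Fin (msz k)) ℝ
  | 0 => 1
  | k + 1 => seqProd msz B k * B k

/-- Lengths of walks in the sequence of digraphs of `(B_k)`, starting at vertex `i`:
the `k`-th edge `(i_k, i_{k+1})` must satisfy `(B_k)_{i_k i_{k+1}} ≠ 0`, and the last
vertex must lie in `Ĵ(B_{|p|+1})`. -/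
def seqWalkLengths (msz : ℕ → ℕ)
    (B : ∀ k : ℕ, Matrix (Fin (msz k)) (Fin (msz (k + 1))) ℝ) (i : ℕ) : Set ℕ :=
  {ℓ : ℕ | 1 ≤ ℓ ∧ ∃ w : ℕ → ℕ, w 0 = i ∧
    (∀ k < ℓ, ∃ (h₁ : w k < msz k) (h₂ : w (k + 1) < msz (k + 1)),
      B k ⟨w k, h₁⟩ ⟨w (k + 1), h₂⟩ ≠ 0) ∧
    ∃ h : w ℓ < msz ℓ, ∑ j, B ℓ ⟨w ℓ, h⟩ j < 1}

/-- The generalized index of contraction `ĉon (B_1, B_2, …) ∈ ℕ∞`. -/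
noncomputable def conHatSeq (msz : ℕ → ℕ)
    (B : ∀ k : ℕ, Matrix (Fin (msz k)) (Fin (msz (k + 1))) ℝ) : ℕ∞ :=
  ⨆ i ∈ (Jhat (B 0))ᶜ, ⨅ ℓ ∈ seqWalkLengths msz B i.val, (ℓ : ℕ∞)

section Stmt18Aux

variable {msz : ℕ → ℕ} {B : ∀ k : ℕ, Matrix (Fin (msz k)) (Fin (msz (k + 1))) ℝ}

lemma seqProd_nonneg (hB : ∀ k, IsSubstochastic (B k)) :
    ∀ k (i : Fin (msz 0)) (j : Fin (msz k)), 0 ≤ seqProd msz B k i j := by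
  intro k
  induction k with
  | zero =>
    intro i j
    by_cases h : i = j <;> simp [seqProd, Matrix.one_apply, h]
  | succ k ih =>
    intro i j
    simp only [seqProd, Matrix.mul_apply]
    exact Finset.sum_nonneg fun l _ => mul_nonneg (ih i l) ((hB k).1 l j)

lemma rowsum_zero (i : Fin (msz 0)) : ∑ j, seqProd msz B 0 i j = 1 := by
  simp [seqProd, Matrix.one_apply]

lemma rowsum_succ (k : ℕ) (i : Fin (msz 0)) :
    ∑ j, seqProd msz B (k + 1) i j
      = ∑ l, seqProd msz B k i l * ∑ j, B k l j := by
  simp only [seqProd, Matrix.mul_apply, Finset.mul_sum]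
  exact Finset.sum_comm

lemma rowsum_step (hB : ∀ k, IsSubstochastic (B k)) (k : ℕ) (i : Fin (msz 0)) :
    ∑ j, seqProd msz B (k + 1) i j ≤ ∑ j, seqProd msz B k i j := by
  rw [rowsum_succ]
  exact Finset.sum_le_sum fun l _ =>
    mul_le_of_le_one_right (seqProd_nonneg hB k i l) ((hB k).2 l)

lemma rowsum_le_one (hB : ∀ k, IsSubstochastic (B k)) (k : ℕ) (i : Fin (msz 0)) :
    ∑ j, seqProd msz B k i j ≤ 1 := by
  induction k with
  | zero => rw [rowsum_zero]
  | succ k ih => exact (rowsum_step hB k i).trans ih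

lemma rowsum_anti (hB : ∀ k, IsSubstochastic (B k)) (i : Fin (msz 0)) :
    Antitone fun k => ∑ j, seqProd msz B k i j :=
  antitone_nat_of_succ_le fun k => rowsum_step hB k i

lemma seqProd_pos_of_path (hB : ∀ k, IsSubstochastic (B k)) (i : Fin (msz 0))
    (w : ℕ → ℕ) (hw0 : w 0 = i.val) :
    ∀ ℓ, (∀ k < ℓ, ∃ (h₁ : w k < msz k) (h₂ : w (k + 1) < msz (k + 1)),
        B k ⟨w k, h₁⟩ ⟨w (k + 1), h₂⟩ ≠ 0) →
      ∃ h : w ℓ < msz ℓ, 0 < seqProd msz B ℓ i ⟨w ℓ, h⟩ := by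
  intro ℓ
  induction ℓ with
  | zero =>
    intro _
    refine ⟨hw0 ▸ i.isLt, ?_⟩
    have e : (⟨w 0, hw0 ▸ i.isLt⟩ : Fin (msz 0)) = i := Fin.ext hw0
    rw [e]
    simp [seqProd, Matrix.one_apply]
  | succ ℓ ih =>
    intro hedges
    obtain ⟨h, hpos⟩ := ih fun k hk => hedges k (hk.trans (Nat.lt_succ_self ℓ))
    obtain ⟨h₁, h₂, hne⟩ := hedges ℓ (Nat.lt_succ_self ℓ)
    refine ⟨h₂, ?_⟩
    show 0 < (seqProd msz B ℓ * B ℓ) i ⟨w (ℓ + 1), h₂⟩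
    rw [Matrix.mul_apply]
    refine Finset.sum_pos' (fun l _ => mul_nonneg (seqProd_nonneg hB ℓ i l) ((hB ℓ).1 l _))
      ⟨⟨w ℓ, h⟩, Finset.mem_univ _, mul_pos hpos ?_⟩
    exact lt_of_le_of_ne ((hB ℓ).1 _ _) (Ne.symm hne)

lemma path_of_seqProd_ne_zero (i : Fin (msz 0)) :
    ∀ k (l : Fin (msz k)), seqProd msz B k i l ≠ 0 →
      ∃ w : ℕ → ℕ, w 0 = i.val ∧ w k = l.val ∧
        ∀ j < k, ∃ (h₁ : w j < msz j) (h₂ : w (j + 1) < msz (j + 1)),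
          B j ⟨w j, h₁⟩ ⟨w (j + 1), h₂⟩ ≠ 0 := by
  intro k
  induction k with
  | zero =>
    intro l h
    have h' : (1 : Matrix (Fin (msz 0)) (Fin (msz 0)) ℝ) i l ≠ 0 := h
    have hil : i = l := by
      by_contra hne
      exact h' (Matrix.one_apply_ne hne)
    exact ⟨fun _ => i.val, rfl, by rw [hil], fun j hj => absurd hj (Nat.not_lt_zero j)⟩
  | succ k ih =>
    intro l h
    simp only [seqProd, Matrix.mul_apply] at h
    obtain ⟨v, -, hv⟩ := Finset.exists_ne_zero_of_sum_ne_zero h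
    obtain ⟨w, hw0, hwk, hedges⟩ := ih v (left_ne_zero_of_mul hv)
    have h2 : B k v l ≠ 0 := right_ne_zero_of_mul hv
    refine ⟨fun n => if n ≤ k then w n else l.val, by simp [hw0], by simp, ?_⟩
    intro j hj
    by_cases hjk : j < k
    · simp only [if_pos (Nat.le_of_lt hjk), if_pos (Nat.succ_le_of_lt hjk)]
      exact hedges j hjk
    · have hjeq : j = k := by omega
      subst hjeq
      simp only [le_refl, if_pos, if_neg (Nat.not_succ_le_self j)]
      refine ⟨hwk ▸ v.isLt, l.isLt, ?_⟩
      have e1 : (⟨w j, hwk ▸ v.isLt⟩ : Fin (msz j)) = v := Fin.ext hwk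
      have e2 : (⟨l.val, l.isLt⟩ : Fin (msz (j + 1))) = l := rfl
      rw [e1, e2]
      exact h2

lemma rowsum_lt_of_walk (hB : ∀ k, IsSubstochastic (B k)) (i : Fin (msz 0)) (ℓ : ℕ)
    (hℓ : ℓ ∈ seqWalkLengths msz B i.val) :
    ∑ j, seqProd msz B (ℓ + 1) i j < 1 := by
  obtain ⟨-, w, hw0, hedges, hlt, hsum⟩ := hℓ
  obtain ⟨h, hpos⟩ := seqProd_pos_of_path hB i w hw0 ℓ hedges
  rw [rowsum_succ]
  have key : ∑ l, seqProd msz B ℓ i l * (∑ j, B ℓ l j) < ∑ l, seqProd msz B ℓ i l :=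
    Finset.sum_lt_sum
      (fun l _ => mul_le_of_le_one_right (seqProd_nonneg hB ℓ i l) ((hB ℓ).2 l))
      ⟨⟨w ℓ, h⟩, Finset.mem_univ _, mul_lt_of_lt_one_right hpos hsum⟩
  exact key.trans_le (rowsum_le_one hB ℓ i)

lemma rowsum_eq_one (hB : ∀ k, IsSubstochastic (B k)) (i : Fin (msz 0))
    (hi : i ∉ Jhat (B 0)) :
    ∀ k, (∀ ℓ ∈ seqWalkLengths msz B i.val, k ≤ ℓ) → ∑ j, seqProd msz B k i j = 1 := by
  intro k
  induction k with
  | zero => intro _; exact rowsum_zero i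
  | succ k ih =>
    intro hW
    have hk : ∑ j, seqProd msz B k i j = 1 :=
      ih fun ℓ hℓ => (Nat.le_succ k).trans (hW ℓ hℓ)
    rw [rowsum_succ]
    have hcongr : ∀ l ∈ Finset.univ,
        seqProd msz B k i l * (∑ j, B k l j) = seqProd msz B k i l := by
      intro l _
      rcases eq_or_ne (seqProd msz B k i l) 0 with h | h
      · rw [h, zero_mul]
      · have hs : ∑ j, B k l j = 1 := by
          by_contra hne
          have hlt : ∑ j, B k l j < 1 := lt_of_le_of_ne ((hB k).2 l) hne
          obtain ⟨w, hw0, hwk, hedges⟩ := path_of_seqProd_ne_zero i k l h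
          rcases Nat.eq_zero_or_pos k with rfl | hk1
          · have hil : i = l := Fin.ext (hw0.symm.trans hwk)
            rw [← hil] at hlt
            exact hi hlt
          · have hkW : k ∈ seqWalkLengths msz B i.val := by
              refine ⟨hk1, w, hw0, hedges, hwk ▸ l.isLt, ?_⟩
              have e : (⟨w k, hwk ▸ l.isLt⟩ : Fin (msz k)) = l := Fin.ext hwk
              rw [e]
              exact hlt
            exact absurd (hW k hkW) (by omega)
        rw [hs, mul_one]
    rw [Finset.sum_congr rfl hcongr, hk]

section Norm
variable {msz : ℕ → ℕ} {B : ∀ k : ℕ, Matrix (Fin (msz k)) (Fin (msz (k + 1))) ℝ}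

lemma norm_eq (hB : ∀ k, IsSubstochastic (B k)) (k : ℕ) :
    rowSumNorm (seqProd msz B k) = ⨆ i, ∑ j, seqProd msz B k i j := by
  rw [rowSumNorm]
  congr 1
  funext i
  exact Finset.sum_congr rfl fun j _ => abs_of_nonneg (seqProd_nonneg hB k i j)

lemma norm_eq_one (h0 : 0 < msz 0) (hB : ∀ k, IsSubstochastic (B k)) (k : ℕ)
    (i : Fin (msz 0)) (hi : ∑ j, seqProd msz B k i j = 1) :
    rowSumNorm (seqProd msz B k) = 1 := by
  have : Nonempty (Fin (msz 0)) := ⟨⟨0, h0⟩⟩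
  rw [norm_eq hB k]
  exact le_antisymm (ciSup_le fun i => rowsum_le_one hB k i)
    (hi ▸ le_ciSup (f := fun i : Fin (msz 0) => ∑ j, seqProd msz B k i j) (Set.finite_range _).bddAbove i)

lemma norm_lt_one (h0 : 0 < msz 0) (hB : ∀ k, IsSubstochastic (B k)) (k : ℕ)
    (h : ∀ i, ∑ j, seqProd msz B k i j < 1) :
    rowSumNorm (seqProd msz B k) < 1 := by
  have : Nonempty (Fin (msz 0)) := ⟨⟨0, h0⟩⟩
  rw [norm_eq hB k]
  obtain ⟨i, hi⟩ := exists_eq_ciSup_of_finite (f := fun i => ∑ j, seqProd msz B k i j)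
  rw [← hi]
  exact h i

lemma norm_mono (h0 : 0 < msz 0) (hB : ∀ k, IsSubstochastic (B k)) (k : ℕ) :
    rowSumNorm (seqProd msz B (k + 1)) ≤ rowSumNorm (seqProd msz B k) := by
  have : Nonempty (Fin (msz 0)) := ⟨⟨0, h0⟩⟩
  rw [norm_eq hB k, norm_eq hB (k + 1)]
  exact ciSup_le fun i =>
    (rowsum_anti hB i (Nat.le_succ k)).trans (le_ciSup (f := fun i : Fin (msz 0) => ∑ j, seqProd msz B k i j) (Set.finite_range _).bddAbove i)

lemma exists_deep (α k : ℕ) (hcon : conHatSeq msz B = (α : ℕ∞)) (hk1 : 1 ≤ k) (hkα : k ≤ α) :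
    ∃ i : Fin (msz 0), i ∉ Jhat (B 0) ∧ ∀ ℓ ∈ seqWalkLengths msz B i.val, k ≤ ℓ := by
  by_contra hcontra
  push_neg at hcontra
  have hle : conHatSeq msz B ≤ ((k - 1 : ℕ) : ℕ∞) := by
    rw [conHatSeq]
    refine iSup₂_le fun i hi => ?_
    obtain ⟨ℓ, hℓW, hℓk⟩ := hcontra i hi
    exact le_trans (iInf₂_le ℓ hℓW) (Nat.cast_le.mpr (by omega))
  rw [hcon] at hle
  have := Nat.cast_le.mp hle
  omega

lemma exists_short (α : ℕ) (hcon : conHatSeq msz B = (α : ℕ∞)) (i : Fin (msz 0))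
    (hi : i ∉ Jhat (B 0)) :
    ∃ ℓ ∈ seqWalkLengths msz B i.val, ℓ ≤ α := by
  by_contra hcontra
  push_neg at hcontra
  have h1 : ((α + 1 : ℕ) : ℕ∞) ≤ ⨅ ℓ ∈ seqWalkLengths msz B i.val, (ℓ : ℕ∞) :=
    le_iInf₂ fun ℓ hℓ => Nat.cast_le.mpr (hcontra ℓ hℓ)
  have h2 : (⨅ ℓ ∈ seqWalkLengths msz B i.val, (ℓ : ℕ∞)) ≤ conHatSeq msz B :=
    le_iSup₂ (f := fun (i : Fin (msz 0)) (_ : i ∈ (Jhat (B 0))ᶜ) =>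
      ⨅ ℓ ∈ seqWalkLengths msz B i.val, (ℓ : ℕ∞)) i hi
  rw [hcon] at h2
  have := Nat.cast_le.mp (h1.trans h2)
  omega

lemma exists_nowalk (hcon : conHatSeq msz B = ⊤) :
    ∃ i : Fin (msz 0), i ∉ Jhat (B 0) ∧ ∀ ℓ, ℓ ∉ seqWalkLengths msz B i.val := by
  classical
  by_contra hcontra
  push_neg at hcontra
  have hle : conHatSeq msz B ≤
      ((Finset.univ.sup fun i : Fin (msz 0) =>
        if h : ∃ ℓ, ℓ ∈ seqWalkLengths msz B i.val then h.choose else 0 : ℕ) : ℕ∞) := by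
    rw [conHatSeq]
    refine iSup₂_le fun i hi => ?_
    obtain ⟨ℓ, hℓ⟩ := hcontra i hi
    have hex : ∃ ℓ, ℓ ∈ seqWalkLengths msz B i.val := ⟨ℓ, hℓ⟩
    refine le_trans (iInf₂_le hex.choose hex.choose_spec) (Nat.cast_le.mpr ?_)
    calc hex.choose = if h : ∃ ℓ, ℓ ∈ seqWalkLengths msz B i.val then h.choose else 0 := by
          rw [dif_pos hex]
      _ ≤ _ := Finset.le_sup (f := fun i : Fin (msz 0) => if h : ∃ ℓ, ℓ ∈ seqWalkLengths msz B i.val then h.choose else 0) (Finset.mem_univ i)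
  rw [hcon] at hle
  simp at hle
end Norm

end Stmt18Aux

theorem stmt18 (msz : ℕ → ℕ) (h0 : 0 < msz 0)
    (B : ∀ k : ℕ, Matrix (Fin (msz k)) (Fin (msz (k + 1))) ℝ)
    (hB : ∀ k, IsSubstochastic (B k)) :
    (∀ α : ℕ, conHatSeq msz B = (α : ℕ∞) →
        (∀ k : ℕ, k ≤ α → rowSumNorm (seqProd msz B k) = 1) ∧
        rowSumNorm (seqProd msz B (α + 1)) < 1 ∧
        ∀ k : ℕ, rowSumNorm (seqProd msz B (k + 1)) ≤ rowSumNorm (seqProd msz B k)) ∧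
      (conHatSeq msz B = ⊤ →
        ∀ k : ℕ, 1 ≤ k → rowSumNorm (seqProd msz B k) = 1) := by

  constructor
  · intro α hcon
    refine ⟨?_, ?_, fun k => norm_mono h0 hB k⟩
    · intro k hk
      rcases Nat.eq_zero_or_pos k with rfl | hk1
      · exact norm_eq_one h0 hB 0 ⟨0, h0⟩ (rowsum_zero _)
      · obtain ⟨i, hi, hW⟩ := exists_deep α k hcon hk1 hk
        exact norm_eq_one h0 hB k i (rowsum_eq_one hB i hi k hW)
    · refine norm_lt_one h0 hB (α + 1) fun i => ?_
      by_cases hi : i ∈ Jhat (B 0)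
      · have e : ∑ j, seqProd msz B 1 i j = ∑ j, B 0 i j := by
          rw [rowsum_succ]
          simp [seqProd, Matrix.one_apply]
        have h1 : ∑ j, seqProd msz B 1 i j < 1 := by rw [e]; exact hi
        exact lt_of_le_of_lt (rowsum_anti hB i (by omega : 1 ≤ α + 1)) h1
      · obtain ⟨ℓ, hℓW, hℓα⟩ := exists_short α hcon i hi
        exact lt_of_le_of_lt (rowsum_anti hB i (by omega : ℓ + 1 ≤ α + 1))
          (rowsum_lt_of_walk hB i ℓ hℓW)
  · intro hcon k _
    obtain ⟨i, hi, hW⟩ := exists_nowalk hcon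
    exact norm_eq_one h0 hB k i (rowsum_eq_one hB i hi k fun ℓ hℓ => absurd hℓ (hW ℓ))
end
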